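/- arXiv:2203.09587 — 7 statements merged into one kernel-verified Lean document; each statement's English description precedes it below -/
import Mathlib

section
/- Let P = {x ∈ ℝⁿ : Ax = b, x ≥ 0} be a polyhedron and let F ⊆ P be a face of P. If P is a simple polyhedron satisfying the non-revisiting property, then every face F of P also satisfies the non-revisiting property. -/
open Set Matrix

noncomputable section

/-- A polyhedron in standard form `{x : Mx = c, x ≥ 0}`. -/
def stdPoly {ι κ : Type*} [Fintype ι] [Fintype κ] (M : Matrix ι κ ℝ) (c : ι → ℝ) :
    Set (κ → ℝ) := {x | M.mulVec x = c ∧ ∀ j, 0 ≤ x j}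

/-- A vertex of a convex set: an extreme point. -/
def IsVertex {E : Type*} [AddCommGroup E] [Module ℝ E] (P : Set E) (v : E) : Prop :=
  v ∈ Set.extremePoints ℝ P

/-- Two vertices of `P` are adjacent if they are distinct and the segment
joining them is a face (an extreme subset) of `P`, i.e. an edge. -/
def Adj {E : Type*} [AddCommGroup E] [Module ℝ E] (P : Set E) (u v : E) : Prop :=
  u ≠ v ∧ IsVertex P u ∧ IsVertex P v ∧ IsExtreme ℝ P (segment ℝ u v)

/-- There is an edge walk of length at most `k` between `u` and `v` in `P`. -/
def HasWalk {E : Type*} [AddCommGroup E] [Module ℝ E] (P : Set E) (u v : E) (k : ℕ) : Prop :=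
  ∃ N ≤ k, ∃ f : ℕ → E, f 0 = u ∧ f N = v ∧ ∀ i < N, Adj P (f i) (f (i + 1))

/-- The combinatorial diameter of `P` is at most `k`. -/
def DiamLE {E : Type*} [AddCommGroup E] [Module ℝ E] (P : Set E) (k : ℕ) : Prop :=
  ∀ u v, IsVertex P u → IsVertex P v → HasWalk P u v k

/-- `diam(M) ≤ k`: every standard-form polyhedron with constraint matrix `M`
has combinatorial diameter at most `k`, regardless of the right-hand side. -/
def MatDiamLE {ι κ : Type*} [Fintype ι] [Fintype κ] (M : Matrix ι κ ℝ) (k : ℕ) : Prop :=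
  ∀ c, DiamLE (stdPoly M c) k

/-- Number of nonzero coordinates. -/
def suppCard {α : Type*} (x : α → ℝ) : ℕ := (Function.support x).ncard

/-- `f 0, …, f N` is a non-revisiting edge walk in `P ⊆ ℝⁿ`: consecutive points are
adjacent vertices, and for every facet `{x : x j = 0}` the set of times at which the walk
lies on that facet is an interval (no facet is revisited after being left). -/
def NRWalk {κ : Type*} [Fintype κ] (P : Set (κ → ℝ)) (f : ℕ → κ → ℝ) (N : ℕ) : Prop :=
  (∀ i < N, Adj P (f i) (f (i + 1))) ∧
  ∀ (j : κ) (i₁ i₂ i₃ : ℕ), i₁ ≤ i₂ → i₂ ≤ i₃ → i₃ ≤ N →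
    f i₁ j = 0 → f i₃ j = 0 → f i₂ j = 0

/-- `P` satisfies the non-revisiting property: every pair of vertices is joined by a
non-revisiting edge walk. -/
def NRSet {κ : Type*} [Fintype κ] (P : Set (κ → ℝ)) : Prop :=
  ∀ u v, IsVertex P u → IsVertex P v →
    ∃ (N : ℕ) (f : ℕ → κ → ℝ), f 0 = u ∧ f N = v ∧ NRWalk P f N

/-- Let `P = {x : Mx = c, x ≥ 0}` be a simple polyhedron (every vertex has
exactly `m` nonzero coordinates, `M` of full row rank `m`) satisfying the non-revisiting
property.  Then every face `F` of `P`, obtained by setting a subset `Z` of the coordinates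
to zero, also satisfies the non-revisiting property; in particular every pair of vertices
of `F` is joined in `P` by a non-revisiting walk, so the combinatorial diameter of `F` is
at most that of `P`. -/
theorem face_nonrevisiting {m n : ℕ} (M : Matrix (Fin m) (Fin n) ℝ) (c : Fin m → ℝ)
    (hrank : M.rank = m)
    (hsimple : ∀ v, IsVertex (stdPoly M c) v → suppCard v = m)
    (hNR : NRSet (stdPoly M c)) (Z : Set (Fin n)) :
    NRSet {x ∈ stdPoly M c | ∀ i ∈ Z, x i = 0} := by
  set P := stdPoly M c with hPdef
  set F := {x ∈ stdPoly M c | ∀ i ∈ Z, x i = 0} with hFdef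
  have hFP : F ⊆ P := fun x hx => hx.1
  -- F is an extreme subset of P
  have hext : IsExtreme ℝ P F := by
    refine ⟨hFP, fun x₁ hx₁ x₂ hx₂ x hxF hxseg => ?_⟩
    obtain ⟨a, b, ha, hb, hab, hx⟩ := hxseg
    have key : ∀ i ∈ Z, x₁ i = 0 ∧ x₂ i = 0 := by
      intro i hi
      have h0 : a * x₁ i + b * x₂ i = 0 := by
        have := congrFun hx i
        simp only [Pi.add_apply, Pi.smul_apply, smul_eq_mul] at this
        rw [this, hxF.2 i hi]
      have h1 := hx₁.2 i
      have h2 := hx₂.2 i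
      constructor <;> nlinarith
    exact ⟨hx₁, fun i hi => (key i hi).1⟩
  -- vertex of P lying in F is a vertex of F
  have hvF' : ∀ x, x ∈ F → IsVertex P x → IsVertex F x := by
    intro x hxF hx
    exact ⟨hxF, fun x₁ hx₁ x₂ hx₂ hseg => hx.2 (hFP hx₁) (hFP hx₂) hseg⟩
  -- adjacency in P between points of F gives adjacency in F
  have hAdjF : ∀ a b, a ∈ F → b ∈ F → Adj P a b → Adj F a b := by
    rintro a b haF hbF ⟨hne, hva, hvb, hseg⟩
    refine ⟨hne, hvF' a haF hva, hvF' b hbF hvb, ?_⟩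
    have hsub : segment ℝ a b ⊆ F := by
      intro x hxmem
      refine ⟨hseg.1 hxmem, fun j hj => ?_⟩
      obtain ⟨s, t, hs, ht, hst, hx⟩ := hxmem
      have := congrFun hx j
      simp only [Pi.add_apply, Pi.smul_apply, smul_eq_mul] at this
      rw [← this, haF.2 j hj, hbF.2 j hj]
      ring
    exact ⟨hsub, fun x₁ hx₁ x₂ hx₂ x hx hop => hseg.2 (hFP hx₁) (hFP hx₂) hx hop⟩
  intro u v hu hv
  have huF : u ∈ F := hu.1
  have hvF : v ∈ F := hv.1
  have huP : IsVertex P u := hext.extremePoints_subset_extremePoints hu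
  have hvP : IsVertex P v := hext.extremePoints_subset_extremePoints hv
  obtain ⟨N, f, h0, hN, hAdj, hNRc⟩ := hNR u v huP hvP
  have hz : ∀ i ≤ N, ∀ j ∈ Z, f i j = 0 := fun i hi j hj =>
    hNRc j 0 i N (Nat.zero_le i) hi le_rfl (h0 ▸ huF.2 j hj) (hN ▸ hvF.2 j hj)
  have hmemF : ∀ i ≤ N, IsVertex P (f i) → f i ∈ F := fun i hi hvtx =>
    ⟨hvtx.1, fun j hj => hz i hi j hj⟩
  refine ⟨N, f, h0, hN, ?_, hNRc⟩
  intro i hi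
  exact hAdjF _ _ (hmemF i (le_of_lt hi) (hAdj i hi).2.1)
    (hmemF (i + 1) hi (hAdj i hi).2.2.1) (hAdj i hi)
end
end

section
/- Let P be a simple polyhedron with f facets and dimension d. If between every two vertices of P there exists a non-revisiting edge walk, then the combinatorial diameter of P is at most f − d (the Hirsch bound). -/
open Set Matrix

noncomputable section

lemma vertex_ker {ι κ : Type*} [Fintype ι] [Fintype κ] {M : Matrix ι κ ℝ} {c : ι → ℝ}
    {v z : κ → ℝ} (hv : IsVertex (stdPoly M c) v)
    (hsupp : Function.support z ⊆ Function.support v) (hz : M.mulVec z = 0) : z = 0 := by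
  classical
  by_contra hne
  obtain ⟨j₀, hj₀⟩ : ∃ j, z j ≠ 0 := by
    by_contra h; push_neg at h; exact hne (funext h)
  set S : Finset κ := Finset.univ.filter (fun j => z j ≠ 0) with hS
  have hSne : S.Nonempty := ⟨j₀, by simp [hS, hj₀]⟩
  set ε : ℝ := S.inf' hSne (fun j => v j / |z j|) with hε
  obtain ⟨hvP, hext⟩ := hv
  have hvpos : ∀ j ∈ S, 0 < v j := by
    intro j hj
    have hzj : z j ≠ 0 := by simpa [hS] using hj
    have hvj : v j ≠ 0 := hsupp (Function.mem_support.2 hzj)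
    exact lt_of_le_of_ne (hvP.2 j) (Ne.symm hvj)
  have hεpos : 0 < ε := by
    rw [hε, Finset.lt_inf'_iff]
    intro j hj
    have hzj : z j ≠ 0 := by simpa [hS] using hj
    exact div_pos (hvpos j hj) (abs_pos.2 hzj)
  have hbound : ∀ j, |ε * z j| ≤ v j := by
    intro j
    by_cases hzj : z j = 0
    · simp [hzj]
      by_cases hj : j ∈ S
      · exact (hvpos j hj).le
      · exact hvP.2 j
    · have hj : j ∈ S := by simp [hS, hzj]
      have h1 : ε ≤ v j / |z j| := Finset.inf'_le _ hj
      rw [abs_mul, abs_of_pos hεpos]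
      calc ε * |z j| ≤ (v j / |z j|) * |z j| :=
            mul_le_mul_of_nonneg_right h1 (abs_nonneg _)
        _ = v j := div_mul_cancel₀ _ (abs_ne_zero.2 hzj)
  have hx₁ : v - ε • z ∈ stdPoly M c := by
    constructor
    · rw [Matrix.mulVec_sub, Matrix.mulVec_smul, hz, smul_zero, sub_zero, hvP.1]
    · intro j
      have := hbound j
      have h2 : ε * z j ≤ |ε * z j| := le_abs_self _
      simp only [Pi.sub_apply, Pi.smul_apply, smul_eq_mul]
      linarith
  have hx₂ : v + ε • z ∈ stdPoly M c := by
    constructor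
    · rw [Matrix.mulVec_add, Matrix.mulVec_smul, hz, smul_zero, add_zero, hvP.1]
    · intro j
      have := hbound j
      have h2 : -(ε * z j) ≤ |ε * z j| := neg_le_abs _
      simp only [Pi.add_apply, Pi.smul_apply, smul_eq_mul]
      linarith
  have hseg : v ∈ openSegment ℝ (v - ε • z) (v + ε • z) := by
    refine ⟨1/2, 1/2, by norm_num, by norm_num, by norm_num, ?_⟩
    module
  have h := hext hx₁ hx₂ hseg
  have hz0 : ε • z = 0 := by
    have h' : v - ε • z = v := h
    have := sub_eq_self.mp h'
    exact this
  rcases smul_eq_zero.1 hz0 with h | h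
  · exact absurd h (ne_of_gt hεpos)
  · exact hne h

/-- Let `P = {x : Mx = c, x ≥ 0}` be a simple polyhedron with `f = n`
facets and dimension `d = n - m` (the matrix `M` having full row rank `m` and the
description being irredundant).  If between every two vertices of `P` there exists a
non-revisiting edge walk, then the combinatorial diameter of `P` is at most
`f - d` (the Hirsch bound). -/
theorem nonrevisiting_implies_hirsch {m n : ℕ} (M : Matrix (Fin m) (Fin n) ℝ)
    (c : Fin m → ℝ) (hrank : M.rank = m) (hmn : m ≤ n)
    (hsimple : ∀ v, IsVertex (stdPoly M c) v → suppCard v = m)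
    (hNR : NRSet (stdPoly M c))
    (f d : ℕ) (hf : f = n) (hd : d = n - m) :
    DiamLE (stdPoly M c) (f - d) := by
  classical
  intro u v hu hv
  obtain ⟨N, w, hw0, hwN, hadj, hnr⟩ := hNR u v hu hv
  refine ⟨N, ?_, w, hw0, hwN, hadj⟩
  have hfd : f - d = m := by omega
  rw [hfd]
  -- each step leaves a facet
  have hstep : ∀ i < N, ∃ j, w i j = 0 ∧ w (i+1) j ≠ 0 := by
    intro i hi
    obtain ⟨hne, hui, hvi, _⟩ := hadj i hi
    by_contra h; push_neg at h
    have hsub : Function.support (w (i+1)) ⊆ Function.support (w i) := by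
      intro j hj
      simp only [Function.mem_support] at hj ⊢
      intro h0; exact hj (h j h0)
    have hcard : suppCard (w (i+1)) = suppCard (w i) := by
      rw [hsimple _ hui, hsimple _ hvi]
    have heq : Function.support (w (i+1)) = Function.support (w i) :=
      Set.eq_of_subset_of_ncard_le hsub (le_of_eq hcard.symm) (Set.toFinite _)
    have hzsupp : Function.support (w (i+1) - w i) ⊆ Function.support (w i) := by
      intro j hj
      rw [Function.mem_support] at hj ⊢
      intro h0
      have h1 : w (i+1) j = 0 := by
        by_contra h1
        exact (heq ▸ Function.mem_support.2 h1 : j ∈ Function.support (w i)) h0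
      exact hj (by rw [Pi.sub_apply, h1, h0, sub_zero])
    have hz : M.mulVec (w (i+1) - w i) = 0 := by
      rw [Matrix.mulVec_sub, hui.1.1, hvi.1.1, sub_self]
    have := vertex_ker hui hzsupp hz
    exact hne (by
      have : w (i+1) - w i = 0 := this
      funext j
      have := congrFun this j
      simp only [Pi.sub_apply, Pi.zero_apply, sub_eq_zero] at this
      exact this.symm)
  -- once a facet is left, it is never revisited
  have hleft : ∀ i < N, ∃ j, w i j = 0 ∧ ∀ i', i < i' → i' ≤ N → w i' j ≠ 0 := by
    intro i hi
    obtain ⟨j, hj0, hj1⟩ := hstep i hi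
    refine ⟨j, hj0, fun i' hii' hi'N hcon => ?_⟩
    exact hj1 (hnr j i (i+1) i' (Nat.le_succ i) hii' hi'N hj0 hcon)
  rcases Nat.eq_zero_or_pos N with hN0 | hNpos
  · omega
  · have : Nonempty (Fin n) := by
      obtain ⟨j, _⟩ := hstep 0 hNpos; exact ⟨j⟩
    set J : ℕ → Fin n := fun i =>
      if h : ∃ j, w i j = 0 ∧ ∀ i', i < i' → i' ≤ N → w i' j ≠ 0 then h.choose
      else Classical.arbitrary _ with hJ
    have hJspec : ∀ i < N, w i (J i) = 0 ∧ ∀ i', i < i' → i' ≤ N → w i' (J i) ≠ 0 := by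
      intro i hi
      have h := hleft i hi
      simp only [hJ, dif_pos h]
      exact h.choose_spec
    have hinj : Set.InjOn J (Finset.range N) := by
      intro i hi i' hi' hJeq
      simp only [Finset.coe_range, Set.mem_Iio] at hi hi'
      by_contra hne
      rcases lt_or_gt_of_ne hne with hlt | hlt
      · exact (hJspec i hi).2 i' hlt (le_of_lt hi') (hJeq ▸ (hJspec i' hi').1)
      · exact (hJspec i' hi').2 i hlt (le_of_lt hi) (hJeq.symm ▸ (hJspec i hi).1)
    have hmaps : ∀ i ∈ Finset.range N, J i ∈ Finset.univ.filter (fun j => w N j ≠ 0) := by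
      intro i hi
      rw [Finset.mem_range] at hi
      simp only [Finset.mem_filter, Finset.mem_univ, true_and]
      exact (hJspec i hi).2 N hi le_rfl
    have hle := Finset.card_le_card_of_injOn J hmaps hinj
    rw [Finset.card_range] at hle
    have hcardv : (Finset.univ.filter (fun j => w N j ≠ 0)).card = m := by
      have := hsimple v hv
      rw [← this, suppCard, ← Set.ncard_coe_finset, ← hwN]
      congr 1
      ext j
      simp [Function.mem_support]
    omega
end
end

section
/- Let S be a polytope with integral vertices contained in the slab {z : s_min ≤ c·z ≤ s_max} for a linear functional c = projection onto a distinguished coordinate s, where both bounds are attained at vertices. Then every vertex v of S is connected by an edge walk of length at most s_max − (c·v) to a vertex maximizing s, along which s strictly increases at each step; symmetrically, v is connected by an edge walk of length at most (c·v) − s_min to a vertex minimizing s. In particular, both distances are at most s_diff := s_max − s_min. -/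
open Set Matrix

noncomputable section

section Helpers

variable {E : Type*} [NormedAddCommGroup E] [NormedSpace ℝ E]

/-- A linear functional bounded on a finite set is bounded on its convex hull. -/
lemma hull_le (V : Finset E) (ℓ : E →L[ℝ] ℝ) (B : ℝ) (h : ∀ w ∈ V, ℓ w ≤ B) :
    ∀ x ∈ convexHull ℝ (V : Set E), ℓ x ≤ B := fun x hx =>
  convexHull_min (fun w hw => h w hw) (convex_halfSpace_le ⟨ℓ.map_add, ℓ.map_smul⟩ B) hx

lemma mem_hull_rep (V : Finset E) {x : E} (hx : x ∈ convexHull ℝ (V : Set E)) :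
    ∃ lam : E → ℝ, (∀ y ∈ V, 0 ≤ lam y) ∧ ∑ y ∈ V, lam y = 1 ∧ ∑ y ∈ V, lam y • y = x := by
  rw [Finset.convexHull_eq] at hx
  obtain ⟨w, h0, h1, hc⟩ := hx
  refine ⟨w, h0, h1, ?_⟩
  rw [← hc, Finset.centerMass_eq_of_sum_1 _ _ h1]
  rfl

/-- Separation of an extreme point of a polytope from the other generators. -/
lemma sep_vertex (V : Finset E) {v : E}
    (hv : v ∈ Set.extremePoints ℝ (convexHull ℝ (V : Set E))) :
    ∃ f : E →L[ℝ] ℝ, ∀ w ∈ V, w ≠ v → f v < f w := by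
  classical
  have hnot : v ∉ convexHull ℝ ((V.erase v : Finset E) : Set E) := by
    intro hmem
    have hsub : convexHull ℝ ((V.erase v : Finset E) : Set E) ⊆ convexHull ℝ (V : Set E) :=
      convexHull_mono (by intro w hw; exact Finset.mem_coe.2 (Finset.mem_of_mem_erase hw))
    have hext : v ∈ Set.extremePoints ℝ (convexHull ℝ ((V.erase v : Finset E) : Set E)) := by
      obtain ⟨_, hprop⟩ := hv
      exact ⟨hmem, fun x hx y hy hseg => hprop (hsub hx) (hsub hy) hseg⟩
    have := extremePoints_convexHull_subset hext
    simp at this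
  obtain ⟨f, r, hfr, hall⟩ := geometric_hahn_banach_point_closed
    (convex_convexHull ℝ _) ((V.erase v).finite_toSet.isClosed_convexHull ℝ) hnot
  refine ⟨f, fun w hw hne => lt_trans hfr (hall w ?_)⟩
  exact subset_convexHull ℝ _ (Finset.mem_coe.2 (Finset.mem_erase.2 ⟨hne, hw⟩))

/-- Two-functional certificate that a segment between two generators is an
extreme subset (edge) of the polytope. -/
lemma segment_isExtreme (V : Finset E) (v u : E) (hvV : v ∈ V) (huV : u ∈ V)
    (g φ : E →L[ℝ] ℝ)
    (hguv : g u < g v)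
    (hgw : ∀ w ∈ V, w ≠ v → w ≠ u → g w < g u)
    (hφuv : φ v < φ u)
    (hφw : ∀ w ∈ V, φ w ≤ φ u) :
    IsExtreme ℝ (convexHull ℝ (V : Set E)) (segment ℝ v u) := by
  classical
  have hvu : v ≠ u := by rintro rfl; exact lt_irrefl _ hguv
  constructor
  · exact (convex_convexHull ℝ _).segment_subset
      (subset_convexHull ℝ _ hvV) (subset_convexHull ℝ _ huV)
  intro x1 hx1 x2 hx2 z hzB hzseg
  obtain ⟨a, b, ha, hb, hab, habz⟩ := hzseg
  obtain ⟨t1, t2, ht1, ht2, ht12, htz⟩ := hzB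
  obtain ⟨lam, hlam0, hlam1, hlamx⟩ := mem_hull_rep V hx1
  obtain ⟨mu, hmu0, hmu1, hmux⟩ := mem_hull_rep V hx2
  set nu : E → ℝ := fun w => a * lam w + b * mu w with hnudef
  have hnu0 : ∀ w ∈ V, 0 ≤ nu w := fun w hw =>
    add_nonneg (mul_nonneg ha.le (hlam0 w hw)) (mul_nonneg hb.le (hmu0 w hw))
  have hnu1 : ∑ w ∈ V, nu w = 1 := by
    simp only [hnudef, Finset.sum_add_distrib, ← Finset.mul_sum, hlam1, hmu1]
    simpa using hab
  have hnuz : ∑ w ∈ V, nu w • w = z := by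
    have : ∑ w ∈ V, nu w • w = a • ∑ w ∈ V, lam w • w + b • ∑ w ∈ V, mu w • w := by
      rw [Finset.smul_sum, Finset.smul_sum, ← Finset.sum_add_distrib]
      refine Finset.sum_congr rfl fun w hw => ?_
      simp [hnudef, add_smul, mul_smul]
    rw [this, hlamx, hmux, habz]
  -- evaluate functionals
  have heval : ∀ ℓ : E →L[ℝ] ℝ, ∑ w ∈ V, nu w * ℓ w = t1 * ℓ v + t2 * ℓ u := by
    intro ℓ
    have h1 : ℓ z = ∑ w ∈ V, nu w * ℓ w := by
      rw [← hnuz, map_sum]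
      exact Finset.sum_congr rfl fun w _ => by simp [smul_eq_mul]
    have h2 : ℓ z = t1 * ℓ v + t2 * ℓ u := by
      rw [← htz]; simp [smul_eq_mul]
    rw [← h1, h2]
  set o : ℝ := ∑ w ∈ V.erase v, nu w with hodef
  have hnuvsplit : nu v + o = 1 := by
    rw [hodef, Finset.add_sum_erase _ _ hvV, hnu1]
  have hsplitg : ∀ ℓ : E →L[ℝ] ℝ,
      nu v * ℓ v + ∑ w ∈ V.erase v, nu w * ℓ w = t1 * ℓ v + t2 * ℓ u := by
    intro ℓ
    rw [Finset.add_sum_erase _ (fun w => nu w * ℓ w) hvV]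
    exact heval ℓ
  have ht1' : t1 = 1 - t2 := by linarith
  -- the g bound gives o ≤ t2
  have hgsum : ∑ w ∈ V.erase v, nu w * g w ≤ o * g u := by
    rw [hodef, Finset.sum_mul]
    refine Finset.sum_le_sum fun w hw => ?_
    have hwV := Finset.mem_of_mem_erase hw
    have hwv := Finset.ne_of_mem_erase hw
    rcases eq_or_ne w u with rfl | hwu
    · exact le_rfl
    · exact mul_le_mul_of_nonneg_left (hgw w hwV hwv hwu).le (hnu0 w hwV)
  have hog : o ≤ t2 := by
    have h := hsplitg g
    have hnuv : nu v = 1 - o := by linarith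
    rw [hnuv, ht1'] at h
    have hS : ∑ w ∈ V.erase v, nu w * g w = o * g v - t2 * g v + t2 * g u := by linarith
    nlinarith [hgsum, hS, sub_pos.2 hguv]
  -- the φ bound gives t2 ≤ o
  have hφsum : ∑ w ∈ V.erase v, nu w * φ w ≤ o * φ u := by
    rw [hodef, Finset.sum_mul]
    refine Finset.sum_le_sum fun w hw => ?_
    exact mul_le_mul_of_nonneg_left (hφw w (Finset.mem_of_mem_erase hw))
      (hnu0 w (Finset.mem_of_mem_erase hw))
  have hoφ : t2 ≤ o := by
    have h := hsplitg φ
    have hnuv : nu v = 1 - o := by linarith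
    rw [hnuv, ht1'] at h
    have hS : ∑ w ∈ V.erase v, nu w * φ w = o * φ v - t2 * φ v + t2 * φ u := by linarith
    nlinarith [hφsum, hS, sub_pos.2 hφuv]
  have hot : o = t2 := le_antisymm hog hoφ
  -- equality analysis kills all other weights
  have heqg : ∑ w ∈ V.erase v, nu w * g w = o * g u := by
    have h := hsplitg g
    have hnuv : nu v = 1 - o := by linarith
    rw [hnuv, ht1', hot] at h
    rw [hot]
    linarith
  have hzero : ∀ w ∈ V.erase v, nu w * (g u - g w) = 0 := by
    have hsum0 : ∑ w ∈ V.erase v, nu w * (g u - g w) = 0 := by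
      have : ∑ w ∈ V.erase v, nu w * (g u - g w)
          = o * g u - ∑ w ∈ V.erase v, nu w * g w := by
        rw [hodef, Finset.sum_mul, ← Finset.sum_sub_distrib]
        exact Finset.sum_congr rfl fun w _ => by ring
      rw [this, heqg, sub_self]
    intro w hw
    refine (Finset.sum_eq_zero_iff_of_nonneg fun w hw => ?_).mp hsum0 w hw
    have hwV := Finset.mem_of_mem_erase hw
    have hwv := Finset.ne_of_mem_erase hw
    rcases eq_or_ne w u with rfl | hwu
    · simp
    · exact mul_nonneg (hnu0 w hwV) (sub_nonneg.2 (hgw w hwV hwv hwu).le)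
  have hkey : ∀ w ∈ V, w ≠ v → w ≠ u → nu w = 0 := by
    intro w hwV hwv hwu
    have hw' : w ∈ V.erase v := Finset.mem_erase.2 ⟨hwv, hwV⟩
    have h0 := hzero w hw'
    have hpos : 0 < g u - g w := sub_pos.2 (hgw w hwV hwv hwu)
    rcases mul_eq_zero.mp h0 with h | h
    · exact h
    · exact absurd h (ne_of_gt hpos)
  -- push to the individual weights
  have tosegment : ∀ (k : E → ℝ) (x' : E), (∀ w ∈ V, 0 ≤ k w) → (∑ w ∈ V, k w = 1) →
      (∑ w ∈ V, k w • w = x') → (∀ w ∈ V, w ≠ v → w ≠ u → k w = 0) →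
      x' ∈ segment ℝ v u := by
    intro k x' hk0 hk1 hkx hken
    have hTV : (insert v {u} : Finset E) ⊆ V := by
      intro w hw
      rcases Finset.mem_insert.mp hw with rfl | hw
      · exact hvV
      · rw [Finset.mem_singleton] at hw; exact hw ▸ huV
    have hout : ∀ w ∈ V, w ∉ (insert v {u} : Finset E) → k w = 0 := by
      intro w hwV hwT
      simp only [Finset.mem_insert, Finset.mem_singleton, not_or] at hwT
      exact hken w hwV hwT.1 hwT.2
    have h1 : ∑ w ∈ (insert v {u} : Finset E), k w = 1 := by
      rw [Finset.sum_subset hTV hout, hk1]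
    have h2 : ∑ w ∈ (insert v {u} : Finset E), k w • w = x' := by
      rw [Finset.sum_subset hTV (fun w hwV hwT => by rw [hout w hwV hwT, zero_smul]), hkx]
    have hvnotu : v ∉ ({u} : Finset E) := by simpa using hvu
    rw [Finset.sum_insert hvnotu, Finset.sum_singleton] at h1 h2
    exact ⟨k v, k u, hk0 v hvV, hk0 u huV, h1, h2⟩
  refine (⟨?_, ?_⟩ : x1 ∈ segment ℝ v u ∧ x2 ∈ segment ℝ v u).1
  · refine tosegment lam x1 hlam0 hlam1 hlamx fun w hwV hwv hwu => ?_
    have h0 := hkey w hwV hwv hwu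
    have h1 : 0 ≤ a * lam w := mul_nonneg ha.le (hlam0 w hwV)
    have h2 : 0 ≤ b * mu w := mul_nonneg hb.le (hmu0 w hwV)
    have h3 : a * lam w = 0 := by
      have : a * lam w + b * mu w = 0 := h0
      linarith
    rcases mul_eq_zero.mp h3 with h | h
    · exact absurd h (ne_of_gt ha)
    · exact h
  · refine tosegment mu x2 hmu0 hmu1 hmux fun w hwV hwv hwu => ?_
    have h0 := hkey w hwV hwv hwu
    have h1 : 0 ≤ a * lam w := mul_nonneg ha.le (hlam0 w hwV)
    have h2 : 0 ≤ b * mu w := mul_nonneg hb.le (hmu0 w hwV)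
    have h3 : b * mu w = 0 := by
      have : a * lam w + b * mu w = 0 := h0
      linarith
    rcases mul_eq_zero.mp h3 with h | h
    · exact absurd h (ne_of_gt hb)
    · exact h

/-- The simplex pivot: a vertex not maximizing a linear functional has a
strictly improving neighbor. -/
lemma exists_improving_neighbor (V : Finset E)
    (hVext : ∀ w ∈ V, w ∈ Set.extremePoints ℝ (convexHull ℝ (V : Set E)))
    (c : E →L[ℝ] ℝ) (v : E) (hv : v ∈ Set.extremePoints ℝ (convexHull ℝ (V : Set E)))
    (p : E) (hp : p ∈ convexHull ℝ (V : Set E)) (hcp : c v < c p) :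
    ∃ u, u ∈ Set.extremePoints ℝ (convexHull ℝ (V : Set E)) ∧ c v < c u ∧
      IsExtreme ℝ (convexHull ℝ (V : Set E)) (segment ℝ v u) := by
  classical
  have hvV : v ∈ V := extremePoints_convexHull_subset hv
  obtain ⟨f, hf⟩ := sep_vertex V hv
  -- some generator has larger value of c
  have hw0 : ∃ w₀ ∈ V, c v < c w₀ := by
    by_contra h
    push_neg at h
    exact absurd (hull_le V c (c v) h p hp) (not_le.2 hcp)
  obtain ⟨w₀, hw₀V, hw₀c⟩ := hw0
  have hw₀v : w₀ ≠ v := fun h => absurd (h ▸ hw₀c) (lt_irrefl _)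
  set V' : Finset E := V.erase v with hV'def
  have hw₀V' : w₀ ∈ V' := Finset.mem_erase.2 ⟨hw₀v, hw₀V⟩
  have hV'ne : V'.Nonempty := ⟨w₀, hw₀V'⟩
  set σ : E → ℝ := fun w => (c w - c v) / (f w - f v) with hσdef
  set m : ℝ := V'.sup' hV'ne σ with hmdef
  have hfpos : ∀ w ∈ V', 0 < f w - f v := fun w hw =>
    sub_pos.2 (hf w (Finset.mem_of_mem_erase hw) (Finset.ne_of_mem_erase hw))
  have hm0 : 0 < m :=
    lt_of_lt_of_le (div_pos (sub_pos.2 hw₀c) (hfpos w₀ hw₀V')) (Finset.le_sup' σ hw₀V')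
  have hσeq : ∀ w ∈ V', c w - c v = σ w * (f w - f v) := fun w hw =>
    (div_mul_cancel₀ _ (ne_of_gt (hfpos w hw))).symm
  set W : Finset E := V'.filter (fun w => σ w = m) with hWdef
  have hWne : W.Nonempty := by
    obtain ⟨b, hb, hbe⟩ := Finset.exists_mem_eq_sup' hV'ne σ
    exact ⟨b, Finset.mem_filter.2 ⟨hb, hbe.symm⟩⟩
  obtain ⟨u, huW, humin⟩ := W.exists_min_image f hWne
  have huV' : u ∈ V' := (Finset.mem_filter.mp huW).1
  have huσ : σ u = m := (Finset.mem_filter.mp huW).2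
  have huV : u ∈ V := Finset.mem_of_mem_erase huV'
  have huv : u ≠ v := Finset.ne_of_mem_erase huV'
  have hcu : c v < c u := by
    have := hσeq u huV'
    rw [huσ] at this
    have hprod := mul_pos hm0 (hfpos u huV')
    linarith
  -- the exposed face functional
  set ψ : E →L[ℝ] ℝ := c - m • f with hψdef
  have hψval : ∀ w, ψ w = c w - m * f w := fun w => by simp [hψdef]
  have hψle : ∀ w ∈ V, ψ w ≤ ψ v := by
    intro w hwV
    rcases eq_or_ne w v with rfl | hwv
    · exact le_rfl
    · have hw' : w ∈ V' := Finset.mem_erase.2 ⟨hwv, hwV⟩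
      have h1 := hσeq w hw'
      have h2 : σ w ≤ m := Finset.le_sup' σ hw'
      have h3 := hfpos w hw'
      rw [hψval, hψval]
      have := mul_nonneg (sub_nonneg.2 h2) h3.le
      linarith
  have hψlt : ∀ w ∈ V, w ≠ v → w ∉ W → ψ w < ψ v := by
    intro w hwV hwv hwW
    have hw' : w ∈ V' := Finset.mem_erase.2 ⟨hwv, hwV⟩
    have h1 := hσeq w hw'
    have h2 : σ w ≤ m := Finset.le_sup' σ hw'
    have h4 : σ w ≠ m := fun h => hwW (Finset.mem_filter.2 ⟨hw', h⟩)
    have h3 := hfpos w hw'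
    rw [hψval, hψval]
    have := mul_pos (sub_pos.2 (lt_of_le_of_ne h2 h4)) h3
    linarith
  have hψeqW : ∀ w ∈ W, ψ w = ψ v := by
    intro w hw
    have hw' : w ∈ V' := (Finset.mem_filter.mp hw).1
    have h1 := hσeq w hw'
    rw [(Finset.mem_filter.mp hw).2] at h1
    rw [hψval, hψval]
    linarith
  -- the face F
  set VF : Finset E := insert v W with hVFdef
  have hVFV : VF ⊆ V := by
    intro w hw
    rcases Finset.mem_insert.mp hw with rfl | hw
    · exact hvV
    · exact Finset.mem_of_mem_erase (Finset.mem_filter.mp hw).1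
  have hψeqVF : ∀ w ∈ VF, ψ w = ψ v := by
    intro w hw
    rcases Finset.mem_insert.mp hw with rfl | hw
    · rfl
    · exact hψeqW w hw
  set F : Set E := convexHull ℝ (VF : Set E) with hFdef
  have hFsub : F ⊆ convexHull ℝ (V : Set E) := convexHull_mono (by exact_mod_cast hVFV)
  have hFeq : F = {x ∈ convexHull ℝ (V : Set E) |
      ∀ y ∈ convexHull ℝ (V : Set E), ψ y ≤ ψ x} := by
    apply Set.Subset.antisymm
    · intro x hx
      have hx1 : ψ x ≤ ψ v := hull_le VF ψ (ψ v) (fun w hw => (hψeqVF w hw).le) x hx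
      have hx2 : ψ v ≤ ψ x := by
        have := hull_le VF (-ψ) (-ψ v) (fun w hw => by simp [hψeqVF w hw]) x hx
        simpa using this
      have hxv : ψ x = ψ v := le_antisymm hx1 hx2
      exact ⟨hFsub hx, fun y hy => (hull_le V ψ (ψ v) hψle y hy).trans_eq hxv.symm⟩
    · rintro x ⟨hxV, hxmax⟩
      have hxv : ψ x = ψ v :=
        le_antisymm (hull_le V ψ (ψ v) hψle x hxV) (hxmax v (subset_convexHull ℝ _ hvV))
      obtain ⟨lam, hlam0, hlam1, hlamx⟩ := mem_hull_rep V hxV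
      have hψx : ∑ w ∈ V, lam w * ψ w = ψ v := by
        have : ψ x = ∑ w ∈ V, lam w * ψ w := by
          rw [← hlamx, map_sum]
          exact Finset.sum_congr rfl fun w _ => by simp [smul_eq_mul]
        rw [← this, hxv]
      have hzero : ∀ w ∈ V, lam w * (ψ v - ψ w) = 0 := by
        have hsum0 : ∑ w ∈ V, lam w * (ψ v - ψ w) = 0 := by
          have : ∑ w ∈ V, lam w * (ψ v - ψ w)
              = (∑ w ∈ V, lam w) * ψ v - ∑ w ∈ V, lam w * ψ w := by
            rw [Finset.sum_mul, ← Finset.sum_sub_distrib]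
            exact Finset.sum_congr rfl fun w _ => by ring
          rw [this, hlam1, hψx]; ring
        intro w hw
        exact (Finset.sum_eq_zero_iff_of_nonneg fun w hw =>
          mul_nonneg (hlam0 w hw) (sub_nonneg.2 (hψle w hw))).mp hsum0 w hw
      have hsupp : ∀ w ∈ V, w ∉ VF → lam w = 0 := by
        intro w hwV hwVF
        have hwv : w ≠ v := fun h => hwVF (h ▸ Finset.mem_insert_self v W)
        have hwW : w ∉ W := fun h => hwVF (Finset.mem_insert_of_mem h)
        have hlt := hψlt w hwV hwv hwW
        rcases mul_eq_zero.mp (hzero w hwV) with h | h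
        · exact h
        · exact absurd h (ne_of_gt (sub_pos.2 hlt))
      have h1 : ∑ w ∈ VF, lam w = 1 := by
        rw [Finset.sum_subset hVFV hsupp, hlam1]
      have h2 : ∑ w ∈ VF, lam w • w = x := by
        rw [Finset.sum_subset hVFV (fun w hwV hwT => by rw [hsupp w hwV hwT, zero_smul]), hlamx]
      rw [hFdef, Finset.convexHull_eq]
      refine ⟨lam, fun y hy => hlam0 y (hVFV hy), h1, ?_⟩
      rw [Finset.centerMass_eq_of_sum_1 _ _ h1]
      exact h2
  have hFexp : IsExposed ℝ (convexHull ℝ (V : Set E)) F := fun _ => ⟨ψ, hFeq⟩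
  have hFext : IsExtreme ℝ (convexHull ℝ (V : Set E)) F := hFexp.isExtreme
  -- second separating functional at u
  obtain ⟨fu, hfu⟩ := sep_vertex V (hVext u huV)
  set φ : E →L[ℝ] ℝ := -fu with hφdef
  have hφ : ∀ w ∈ V, w ≠ u → φ w < φ u := by
    intro w hw hne
    simp only [hφdef, ContinuousLinearMap.neg_apply, neg_lt_neg_iff]
    exact hfu w hw hne
  have hφuv : φ v < φ u := hφ v hvV (Ne.symm huv)
  set θ : ℝ := (f u - f v) / (2 * (φ u - φ v)) with hθdef
  have hfuv : 0 < f u - f v := hfpos u huV'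
  have hφd : 0 < φ u - φ v := sub_pos.2 hφuv
  have hθ0 : 0 < θ := div_pos hfuv (by positivity)
  set g : E →L[ℝ] ℝ := θ • φ - f with hgdef
  have hgval : ∀ w, g w = θ * φ w - f w := fun w => by simp [hgdef]
  have hθprod : θ * (φ u - φ v) = (f u - f v) / 2 := by
    rw [hθdef]; field_simp
  have hguv : g u < g v := by
    rw [hgval, hgval]
    linarith [hθprod, hfuv]
  have hgw : ∀ w ∈ VF, w ≠ v → w ≠ u → g w < g u := by
    intro w hw hwv hwu
    have hwW : w ∈ W := by
      rcases Finset.mem_insert.mp hw with rfl | h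
      · exact absurd rfl hwv
      · exact h
    have h1 : f u ≤ f w := humin w hwW
    have h2 : φ w < φ u := hφ w (hVFV hw) hwu
    rw [hgval, hgval]
    have := mul_pos hθ0 (sub_pos.2 h2)
    linarith
  have hφw : ∀ w ∈ VF, φ w ≤ φ u := by
    intro w hw
    rcases eq_or_ne w u with rfl | hne
    · exact le_rfl
    · exact (hφ w (hVFV hw) hne).le
  have hvVF : v ∈ VF := Finset.mem_insert_self v W
  have huVF : u ∈ VF := Finset.mem_insert_of_mem huW
  have hedge : IsExtreme ℝ F (segment ℝ v u) :=
    segment_isExtreme VF v u hvVF huVF g φ hguv hgw hφuv hφw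
  exact ⟨u, hVext u huV, hcu, hFext.trans hedge⟩

/-- Strictly increasing edge walks, by induction on the integer gap. -/
lemma walk_up (V : Finset E)
    (hVext : ∀ w ∈ V, w ∈ Set.extremePoints ℝ (convexHull ℝ (V : Set E)))
    (c : E →L[ℝ] ℝ) (M : ℤ)
    (hub : ∀ p ∈ convexHull ℝ (V : Set E), c p ≤ (M : ℝ))
    (hatt : ∃ p ∈ convexHull ℝ (V : Set E), c p = (M : ℝ))
    (hint : ∀ w, w ∈ Set.extremePoints ℝ (convexHull ℝ (V : Set E)) → ∃ z : ℤ, c w = (z : ℝ)) :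
    ∀ (d : ℕ) (v : E), v ∈ Set.extremePoints ℝ (convexHull ℝ (V : Set E)) →
      (M : ℝ) - c v ≤ d →
      ∃ (N : ℕ) (f : ℕ → E), f 0 = v ∧ c (f N) = (M : ℝ) ∧
        (∀ i < N, Adj (convexHull ℝ (V : Set E)) (f i) (f (i + 1))) ∧
        (∀ i < N, c (f i) < c (f (i + 1))) ∧
        (N : ℝ) ≤ (M : ℝ) - c v ∧ N ≤ d := by
  intro d
  induction d with
  | zero =>
    intro v hv hle
    have hcv : c v = M := le_antisymm (hub v (extremePoints_subset hv)) (by simpa using hle)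
    exact ⟨0, fun _ => v, rfl, hcv, by simp, by simp, by simp [hcv], le_refl 0⟩
  | succ d ih =>
    intro v hv hle
    by_cases hcv : c v = (M : ℝ)
    · exact ⟨0, fun _ => v, rfl, hcv, by simp, by simp, by simp [hcv], by simp⟩
    · have hlt : c v < M := lt_of_le_of_ne (hub v (extremePoints_subset hv)) hcv
      obtain ⟨p, hp, hpM⟩ := hatt
      obtain ⟨u, hu, hcu, hext⟩ := exists_improving_neighbor V hVext c v hv p hp
        (by rw [hpM]; exact hlt)
      obtain ⟨zv, hzv⟩ := hint v hv
      obtain ⟨zu, hzu⟩ := hint u hu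
      have hzlt : zv < zu := by
        rw [hzv, hzu] at hcu; exact_mod_cast hcu
      have hstep : c v + 1 ≤ c u := by
        rw [hzv, hzu]
        have : zv + 1 ≤ zu := hzlt
        exact_mod_cast this
      have hule : (M : ℝ) - c u ≤ d := by
        push_cast at hle ⊢
        linarith
      obtain ⟨N, w, hw0, hwM, hadj, hmono, hlen, hNd⟩ := ih u hu hule
      have hvune : v ≠ u := fun h => absurd (h ▸ hcu) (lt_irrefl _)
      refine ⟨N + 1, fun i => match i with | 0 => v | Nat.succ j => w j, rfl, ?_, ?_, ?_, ?_, ?_⟩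
      · exact hwM
      · intro i hi
        match i with
        | 0 =>
          show Adj (convexHull ℝ (V : Set E)) v (w 0)
          rw [hw0]
          exact ⟨hvune, hv, hu, hext⟩
        | Nat.succ j =>
          show Adj (convexHull ℝ (V : Set E)) (w j) (w (j + 1))
          exact hadj j (by omega)
      · intro i hi
        match i with
        | 0 =>
          show c v < c (w 0)
          rw [hw0]
          linarith
        | Nat.succ j =>
          show c (w j) < c (w (j + 1))
          exact hmono j (by omega)
      · push_cast
        linarith
      · omega

end Helpers

/-- Let `S` be an integral polytope contained in the slab
`{z : s_min ≤ z i₀ ≤ s_max}` for a distinguished coordinate `i₀`, with both bounds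
attained at vertices.  Then every vertex `v` of `S` is connected to a vertex maximizing
the coordinate `s` by a strictly `s`-increasing edge walk of length at most
`s_max - v i₀`, and symmetrically to a vertex minimizing `s` by a strictly
`s`-decreasing edge walk of length at most `v i₀ - s_min`; in particular both lengths
are at most `s_diff = s_max - s_min`. -/
theorem monotone_walk_to_extreme {n : ℕ} (S : Set (Fin n → ℝ))
    (hpoly : ∃ V : Finset (Fin n → ℝ), S = convexHull ℝ ↑V)
    (i₀ : Fin n) (smin smax : ℤ)
    (hint : ∀ v, IsVertex S v → ∀ i, ∃ z : ℤ, v i = z)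
    (hslab : ∀ p ∈ S, (smin : ℝ) ≤ p i₀ ∧ p i₀ ≤ (smax : ℝ))
    (hminatt : ∃ v, IsVertex S v ∧ v i₀ = (smin : ℝ))
    (hmaxatt : ∃ v, IsVertex S v ∧ v i₀ = (smax : ℝ))
    (v : Fin n → ℝ) (hv : IsVertex S v) :
    (∃ (N : ℕ) (f : ℕ → Fin n → ℝ), f 0 = v ∧ f N i₀ = (smax : ℝ) ∧
      (∀ i < N, Adj S (f i) (f (i + 1))) ∧ (∀ i < N, f i i₀ < f (i + 1) i₀) ∧
      (N : ℝ) ≤ (smax : ℝ) - v i₀ ∧ N ≤ (smax - smin).toNat) ∧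
    (∃ (N : ℕ) (f : ℕ → Fin n → ℝ), f 0 = v ∧ f N i₀ = (smin : ℝ) ∧
      (∀ i < N, Adj S (f i) (f (i + 1))) ∧ (∀ i < N, f (i + 1) i₀ < f i i₀) ∧
      (N : ℝ) ≤ v i₀ - (smin : ℝ) ∧ N ≤ (smax - smin).toNat) := by
  obtain ⟨V₀, hV₀⟩ := hpoly
  -- the vertex set
  have hEsub : Set.extremePoints ℝ S ⊆ (V₀ : Set (Fin n → ℝ)) := by
    rw [hV₀]; exact extremePoints_convexHull_subset
  have hEfin : (Set.extremePoints ℝ S).Finite := V₀.finite_toSet.subset hEsub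
  set V : Finset (Fin n → ℝ) := hEfin.toFinset with hVdef
  have hVcoe : (V : Set (Fin n → ℝ)) = Set.extremePoints ℝ S := hEfin.coe_toFinset
  have hcomp : IsCompact S := hV₀ ▸ V₀.finite_toSet.isCompact_convexHull ℝ
  have hconvS : Convex ℝ S := hV₀ ▸ convex_convexHull ℝ _
  have hSV : S = convexHull ℝ (V : Set (Fin n → ℝ)) := by
    have hKM := closure_convexHull_extremePoints hcomp hconvS
    have hclosed : IsClosed (convexHull ℝ (Set.extremePoints ℝ S)) :=
      hEfin.isClosed_convexHull ℝ
    rw [hVcoe, ← hclosed.closure_eq]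
    exact hKM.symm
  have hVext : ∀ w ∈ V, w ∈ Set.extremePoints ℝ (convexHull ℝ (V : Set (Fin n → ℝ))) := by
    intro w hw
    rw [← hSV]
    exact hVcoe ▸ Finset.mem_coe.2 hw
  have hvS : v ∈ S := extremePoints_subset hv
  have hv' : v ∈ Set.extremePoints ℝ (convexHull ℝ (V : Set (Fin n → ℝ))) := hSV ▸ hv
  -- basic bounds
  obtain ⟨vM, hvM, hvMi⟩ := hmaxatt
  obtain ⟨vm, hvm, hvmi⟩ := hminatt
  have hminmax : smin ≤ smax := by
    have h := (hslab vM (extremePoints_subset hvM)).1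
    rw [hvMi] at h
    exact_mod_cast h
  have htoNat : (((smax - smin).toNat : ℤ) : ℝ) = (smax : ℝ) - (smin : ℝ) := by
    rw [Int.toNat_of_nonneg (sub_nonneg.2 hminmax)]; push_cast; ring
  set cp : (Fin n → ℝ) →L[ℝ] ℝ := ContinuousLinearMap.proj i₀ with hcpdef
  have hcpval : ∀ x : Fin n → ℝ, cp x = x i₀ := fun x => rfl
  constructor
  · -- maximizing walk
    have hub : ∀ p ∈ convexHull ℝ (V : Set (Fin n → ℝ)), cp p ≤ (smax : ℝ) := by
      intro p hp; rw [hcpval]; exact (hslab p (hSV ▸ hp)).2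
    have hatt : ∃ p ∈ convexHull ℝ (V : Set (Fin n → ℝ)), cp p = (smax : ℝ) :=
      ⟨vM, hSV ▸ extremePoints_subset hvM, hvMi⟩
    have hintc : ∀ w, w ∈ Set.extremePoints ℝ (convexHull ℝ (V : Set (Fin n → ℝ))) →
        ∃ z : ℤ, cp w = (z : ℝ) := by
      intro w hw
      exact hint w (hSV ▸ hw : IsVertex S w) i₀
    have hd : (smax : ℝ) - cp v ≤ ((smax - smin).toNat : ℕ) := by
      rw [hcpval]
      have h1 := (hslab v hvS).1
      have : ((((smax - smin).toNat : ℕ)) : ℝ) = (smax : ℝ) - (smin : ℝ) := by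
        exact_mod_cast htoNat
      rw [this]
      linarith
    obtain ⟨N, f, hf0, hfM, hadj, hmono, hlen, hNd⟩ :=
      walk_up V hVext cp smax hub hatt hintc ((smax - smin).toNat) v hv' hd
    refine ⟨N, f, hf0, hfM, ?_, fun i hi => hmono i hi, by rw [← hcpval v]; exact hlen, hNd⟩
    intro i hi
    have := hadj i hi
    rwa [← hSV] at this
  · -- minimizing walk
    set cm : (Fin n → ℝ) →L[ℝ] ℝ := -cp with hcmdef
    have hcmval : ∀ x : Fin n → ℝ, cm x = -(x i₀) := fun x => rfl
    have hub : ∀ p ∈ convexHull ℝ (V : Set (Fin n → ℝ)), cm p ≤ ((-smin : ℤ) : ℝ) := by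
      intro p hp
      rw [hcmval]
      have := (hslab p (hSV ▸ hp)).1
      push_cast
      linarith
    have hatt : ∃ p ∈ convexHull ℝ (V : Set (Fin n → ℝ)), cm p = ((-smin : ℤ) : ℝ) := by
      refine ⟨vm, hSV ▸ extremePoints_subset hvm, ?_⟩
      rw [hcmval, hvmi]; push_cast; ring
    have hintc : ∀ w, w ∈ Set.extremePoints ℝ (convexHull ℝ (V : Set (Fin n → ℝ))) →
        ∃ z : ℤ, cm w = (z : ℝ) := by
      intro w hw
      obtain ⟨z, hz⟩ := hint w (hSV ▸ hw : IsVertex S w) i₀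
      exact ⟨-z, by rw [hcmval, hz]; push_cast; ring⟩
    have hd : ((-smin : ℤ) : ℝ) - cm v ≤ ((smax - smin).toNat : ℕ) := by
      rw [hcmval]
      have h2 := (hslab v hvS).2
      have : ((((smax - smin).toNat : ℕ)) : ℝ) = (smax : ℝ) - (smin : ℝ) := by
        exact_mod_cast htoNat
      rw [this]
      push_cast
      linarith
    obtain ⟨N, f, hf0, hfM, hadj, hmono, hlen, hNd⟩ :=
      walk_up V hVext cm (-smin) hub hatt hintc ((smax - smin).toNat) v hv' hd
    refine ⟨N, f, hf0, ?_, ?_, ?_, ?_, hNd⟩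
    · have := hfM
      rw [hcmval] at this
      push_cast at this
      linarith
    · intro i hi
      have := hadj i hi
      rwa [← hSV] at this
    · intro i hi
      have := hmono i hi
      rw [hcmval, hcmval] at this
      linarith
    · have := hlen
      rw [hcmval] at this
      push_cast at this ⊢
      linarith
end
end

section
/- Let P(Ā,B̄) be the parallel connection constraint matrix [[A,0,0],[a,1,b],[0,0,B]] of Ā = [[A,0],[a,1]] ∈ ℝ^{m₁×n₁} and B̄ = [[1,b],[0,B]] ∈ ℝ^{m₂×n₂}, and let 𝒫 = {(x,s,y) ≥ 0 : P(Ā,B̄)(x,s,y) = (c_A, c_a+c_b, c_B)} be a simple parallel-connection polyhedron. Then for every vertex (x,s,y) of 𝒫, exactly one of the following holds: (1) x has m₁ nonzero coordinates, s = 0, and y has m₂−1 nonzero coordinates; (2) x has m₁−1 nonzero coordinates, s > 0, and y has m₂−1 nonzero coordinates; (3) x has m₁−1 nonzero coordinates, s = 0, and y has m₂ nonzero coordinates. -/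
open Set Matrix

noncomputable section

/-- The matrix `Ā = [[A, 0], [a, 1]]`. -/
def Abar {mA nA : ℕ} (A : Matrix (Fin mA) (Fin nA) ℝ) (a : Fin nA → ℝ) :
    Matrix (Fin mA ⊕ Unit) (Fin nA ⊕ Unit) ℝ :=
  Matrix.of fun i j =>
    match i, j with
    | Sum.inl i, Sum.inl j => A i j
    | Sum.inl _, Sum.inr _ => 0
    | Sum.inr _, Sum.inl j => a j
    | Sum.inr _, Sum.inr _ => 1

/-- The matrix `B̄ = [[1, b], [0, B]]`. -/
def Bbar {mB nB : ℕ} (B : Matrix (Fin mB) (Fin nB) ℝ) (b : Fin nB → ℝ) :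
    Matrix (Unit ⊕ Fin mB) (Unit ⊕ Fin nB) ℝ :=
  Matrix.of fun i j =>
    match i, j with
    | Sum.inl _, Sum.inl _ => 1
    | Sum.inl _, Sum.inr j => b j
    | Sum.inr _, Sum.inl _ => 0
    | Sum.inr i, Sum.inr j => B i j

/-- The parallel-connection polyhedron `𝒫`, with points written `(x, s, y)`. -/
def parallelPoly {mA nA mB nB : ℕ} (A : Matrix (Fin mA) (Fin nA) ℝ) (a : Fin nA → ℝ)
    (B : Matrix (Fin mB) (Fin nB) ℝ) (b : Fin nB → ℝ)
    (cA : Fin mA → ℝ) (ca cb : ℝ) (cB : Fin mB → ℝ) :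
    Set ((Fin nA → ℝ) × ℝ × (Fin nB → ℝ)) :=
  {p | A.mulVec p.1 = cA ∧ a ⬝ᵥ p.1 + p.2.1 + b ⬝ᵥ p.2.2 = ca + cb ∧
       B.mulVec p.2.2 = cB ∧ (∀ i, 0 ≤ p.1 i) ∧ 0 ≤ p.2.1 ∧ ∀ j, 0 ≤ p.2.2 j}

/-- Total number of nonzero coordinates of a point `(x, s, y)`. -/
def pSupp {nA nB : ℕ} (p : (Fin nA → ℝ) × ℝ × (Fin nB → ℝ)) : ℕ :=
  suppCard p.1 + (if p.2.1 = 0 then 0 else 1) + suppCard p.2.2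

/-! The equations `Ax = c_A` and `By = c_B` already force `m₁ - 1` nonzero coordinates in `x`
and `m₂ - 1` in `y`; simplicity of `𝒫` leaves room for exactly one more, which lies in `x`,
in `s` or in `y`. -/

theorem supp_categories_of_count {kx ky mA mB : ℕ} {s : ℝ} (hs : 0 ≤ s)
    (hx : mA ≤ kx) (hy : mB ≤ ky) (htot : kx + (if s = 0 then 0 else 1) + ky = mA + mB + 1) :
    (kx = mA + 1 ∧ s = 0 ∧ ky = mB) ∨ (kx = mA ∧ 0 < s ∧ ky = mB) ∨
      (kx = mA ∧ s = 0 ∧ ky = mB + 1) := by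
  rcases hs.eq_or_lt with hzero | hpos
  · rw [if_pos hzero.symm, add_zero] at htot
    by_cases hkx : kx = mA
    · exact Or.inr (Or.inr ⟨hkx, hzero.symm, by omega⟩)
    · exact Or.inl ⟨by omega, hzero.symm, by omega⟩
  · rw [if_neg hpos.ne'] at htot
    exact Or.inr (Or.inl ⟨by omega, hpos, by omega⟩)

/-- (Categorization of the vertices of the parallel-connection
polyhedron.)  With `m₁ = mA + 1` and `m₂ = mB + 1`, suppose any nonnegative solution of
`Ax = c_A` has at least `m₁ - 1 = mA` nonzero coordinates and any nonnegative solution of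
`By = c_B` has at least `m₂ - 1 = mB` nonzero coordinates (simplicity of `Q` and `R`),
and suppose `𝒫` is simple: every vertex has exactly `m₁ + m₂ - 1 = mA + mB + 1` nonzero
coordinates.  Then every vertex `(x, s, y)` of `𝒫` falls into exactly one of the three
categories `(m₁, 0, m₂ - 1)`, `(m₁ - 1, 1, m₂ - 1)`, `(m₁ - 1, 0, m₂)`. -/
theorem parallel_vertex_categorization {mA nA mB nB : ℕ}
    (A : Matrix (Fin mA) (Fin nA) ℝ) (a : Fin nA → ℝ)
    (B : Matrix (Fin mB) (Fin nB) ℝ) (b : Fin nB → ℝ)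
    (cA : Fin mA → ℝ) (ca cb : ℝ) (cB : Fin mB → ℝ)
    (hA : ∀ x : Fin nA → ℝ, A.mulVec x = cA → (∀ i, 0 ≤ x i) → mA ≤ suppCard x)
    (hB : ∀ y : Fin nB → ℝ, B.mulVec y = cB → (∀ j, 0 ≤ y j) → mB ≤ suppCard y)
    (hsimple : ∀ p, IsVertex (parallelPoly A a B b cA ca cb cB) p →
      pSupp p = mA + mB + 1)
    (p : (Fin nA → ℝ) × ℝ × (Fin nB → ℝ))
    (hp : IsVertex (parallelPoly A a B b cA ca cb cB) p) :
    (suppCard p.1 = mA + 1 ∧ p.2.1 = 0 ∧ suppCard p.2.2 = mB) ∨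
    (suppCard p.1 = mA ∧ 0 < p.2.1 ∧ suppCard p.2.2 = mB) ∨
    (suppCard p.1 = mA ∧ p.2.1 = 0 ∧ suppCard p.2.2 = mB + 1) := by
  obtain ⟨hAx, -, hBy, hx_nonneg, hs_nonneg, hy_nonneg⟩ := hp.1
  exact supp_categories_of_count hs_nonneg (hA _ hAx hx_nonneg) (hB _ hBy hy_nonneg)
    (hsimple p hp)
end
end

section
/- With the parallel-connection polyhedron 𝒫 as above (simple, with simple Q and R), let (x,s,y) be a vertex of 𝒫 such that y has exactly m₂−1 nonzero coordinates, and set t = c_a + c_b − b·y. Then the set Q(t) × {y}, where Q(t) = {(x',s') ≥ 0 : A x' = c_A, a·x' + s' = t}, is a face of 𝒫. Consequently, if (x¹,s¹,y) and (x²,s²,y) are two vertices of 𝒫 sharing the same y-block, their graph distance in 𝒫 is at most diam(Ā), the maximal diameter of a polyhedron with constraint matrix Ā over all right-hand sides. -/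
open Set Matrix

noncomputable section

section AffTransfer

variable {E F' : Type*} [AddCommGroup E] [Module ℝ E] [AddCommGroup F'] [Module ℝ F']
variable {ψ : E → F'}

theorem aff_image_segment (haff : ∀ a b : ℝ, a + b = 1 → ∀ u v : E,
      ψ (a • u + b • v) = a • ψ u + b • ψ v) (u v : E) :
    ψ '' segment ℝ u v = segment ℝ (ψ u) (ψ v) := by
  ext p
  constructor
  · rintro ⟨z, ⟨α, β, hα, hβ, hαβ, rfl⟩, rfl⟩
    exact ⟨α, β, hα, hβ, hαβ, (haff α β hαβ u v).symm⟩
  · rintro ⟨α, β, hα, hβ, hαβ, rfl⟩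
    exact ⟨α • u + β • v, ⟨α, β, hα, hβ, hαβ, rfl⟩, haff α β hαβ u v⟩

theorem aff_mem_openSegment (hinj : Function.Injective ψ)
    (haff : ∀ a b : ℝ, a + b = 1 → ∀ u v : E,
      ψ (a • u + b • v) = a • ψ u + b • ψ v) (u v z : E) :
    ψ z ∈ openSegment ℝ (ψ u) (ψ v) ↔ z ∈ openSegment ℝ u v := by
  constructor
  · rintro ⟨α, β, hα, hβ, hαβ, h⟩
    exact ⟨α, β, hα, hβ, hαβ, hinj (by rw [haff α β hαβ u v, h])⟩
  · rintro ⟨α, β, hα, hβ, hαβ, rfl⟩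
    exact ⟨α, β, hα, hβ, hαβ, (haff α β hαβ u v).symm⟩

theorem aff_extremePoints (hinj : Function.Injective ψ)
    (haff : ∀ a b : ℝ, a + b = 1 → ∀ u v : E,
      ψ (a • u + b • v) = a • ψ u + b • ψ v) (S : Set E) :
    (ψ '' S).extremePoints ℝ = ψ '' (S.extremePoints ℝ) := by
  ext p
  constructor
  · rintro ⟨⟨z, hzS, rfl⟩, hmax⟩
    refine ⟨z, ⟨hzS, fun z₁ hz₁ z₂ hz₂ hseg => ?_⟩, rfl⟩
    have := hmax (Set.mem_image_of_mem ψ hz₁) (Set.mem_image_of_mem ψ hz₂)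
      ((aff_mem_openSegment hinj haff z₁ z₂ z).mpr hseg)
    exact hinj this
  · rintro ⟨z, ⟨hzS, hmax⟩, rfl⟩
    refine ⟨Set.mem_image_of_mem ψ hzS, ?_⟩
    rintro _ ⟨z₁, hz₁, rfl⟩ _ ⟨z₂, hz₂, rfl⟩ hseg
    have := hmax hz₁ hz₂ ((aff_mem_openSegment hinj haff z₁ z₂ z).mp hseg)
    exact congrArg ψ this

theorem aff_isExtreme (hinj : Function.Injective ψ)
    (haff : ∀ a b : ℝ, a + b = 1 → ∀ u v : E,
      ψ (a • u + b • v) = a • ψ u + b • ψ v) {S U : Set E}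
    (h : IsExtreme ℝ S U) : IsExtreme ℝ (ψ '' S) (ψ '' U) := by
  constructor
  · exact Set.image_mono h.1
  · rintro _ ⟨w₁, hw₁, rfl⟩ _ ⟨w₂, hw₂, rfl⟩ _ ⟨w, hw, rfl⟩ hseg
    rw [aff_mem_openSegment hinj haff] at hseg
    exact Set.mem_image_of_mem _ (h.2 hw₁ hw₂ hw hseg)

end AffTransfer

theorem Abar_mulVec_inl {mA nA : ℕ} (A : Matrix (Fin mA) (Fin nA) ℝ) (a : Fin nA → ℝ)
    (z : Fin nA ⊕ Unit → ℝ) (i : Fin mA) :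
    (Abar A a).mulVec z (Sum.inl i) = A.mulVec (fun j => z (Sum.inl j)) i := by
  simp [Matrix.mulVec, dotProduct, Fintype.sum_sum_type, Abar]

theorem Abar_mulVec_inr {mA nA : ℕ} (A : Matrix (Fin mA) (Fin nA) ℝ) (a : Fin nA → ℝ)
    (z : Fin nA ⊕ Unit → ℝ) (u : Unit) :
    (Abar A a).mulVec z (Sum.inr u) = a ⬝ᵥ (fun j => z (Sum.inl j)) + z (Sum.inr ()) := by
  simp [Matrix.mulVec, dotProduct, Fintype.sum_sum_type, Abar]

/-- Let `𝒫` be the (simple) parallel-connection polyhedron and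
`(x, s, y)` a vertex of `𝒫` whose `y`-block has exactly `m₂ - 1 = mB` nonzero
coordinates; set `t = c_a + c_b - b·y`.  Then (using the simplicity of `R`: `y` is the
unique nonnegative solution of `By = c_B` with support contained in `supp y`) the set
`Q(t) × {y}`, with `Q(t) = {(x', s') ≥ 0 : Ax' = c_A, a·x' + s' = t}`, is a face of `𝒫`.
Consequently any two vertices of `𝒫` sharing the `y`-block are at graph distance at most
`diam(Ā)` in `𝒫`. -/
theorem parallel_lift_lemma {mA nA mB nB : ℕ}
    (A : Matrix (Fin mA) (Fin nA) ℝ) (a : Fin nA → ℝ)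
    (B : Matrix (Fin mB) (Fin nB) ℝ) (b : Fin nB → ℝ)
    (cA : Fin mA → ℝ) (ca cb : ℝ) (cB : Fin mB → ℝ)
    (hsimple : ∀ p, IsVertex (parallelPoly A a B b cA ca cb cB) p →
      pSupp p = mA + mB + 1)
    (dA : ℕ) (hdA : MatDiamLE (Abar A a) dA)
    (x : Fin nA → ℝ) (s : ℝ) (y : Fin nB → ℝ)
    (hvert : IsVertex (parallelPoly A a B b cA ca cb cB) (x, s, y))
    (hy : suppCard y = mB)
    (hyuniq : ∀ y' : Fin nB → ℝ, B.mulVec y' = cB → (∀ j, 0 ≤ y' j) →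
      Function.support y' ⊆ Function.support y → y' = y) :
    IsExtreme ℝ (parallelPoly A a B b cA ca cb cB)
      {p : (Fin nA → ℝ) × ℝ × (Fin nB → ℝ) |
        A.mulVec p.1 = cA ∧ a ⬝ᵥ p.1 + p.2.1 = ca + cb - b ⬝ᵥ y ∧
        (∀ i, 0 ≤ p.1 i) ∧ 0 ≤ p.2.1 ∧ p.2.2 = y} ∧
    ∀ x₁ s₁ x₂ s₂, IsVertex (parallelPoly A a B b cA ca cb cB) (x₁, s₁, y) →
      IsVertex (parallelPoly A a B b cA ca cb cB) (x₂, s₂, y) →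
      HasWalk (parallelPoly A a B b cA ca cb cB) (x₁, s₁, y) (x₂, s₂, y) dA := by
  set P := parallelPoly A a B b cA ca cb cB with hP
  set t : ℝ := ca + cb - b ⬝ᵥ y with ht
  set F : Set ((Fin nA → ℝ) × ℝ × (Fin nB → ℝ)) :=
    {p : (Fin nA → ℝ) × ℝ × (Fin nB → ℝ) |
        A.mulVec p.1 = cA ∧ a ⬝ᵥ p.1 + p.2.1 = ca + cb - b ⬝ᵥ y ∧
        (∀ i, 0 ≤ p.1 i) ∧ 0 ≤ p.2.1 ∧ p.2.2 = y} with hF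
  obtain ⟨hxA0, hsum0, hBy, hx0, hs0, hy0⟩ := hvert.1
  -- `F` is a face of `P`
  have hFsub : F ⊆ P := by
    rintro p ⟨h1, h2, h3, h4, h5⟩
    refine ⟨h1, ?_, ?_, h3, h4, ?_⟩
    · rw [h5]; linarith
    · rw [h5]; exact hBy
    · rw [h5]; exact hy0
  have hFace : IsExtreme ℝ P F := by
    refine ⟨hFsub, ?_⟩
    rintro q₁ hq₁ q₂ hq₂ p hp ⟨α, β, hα, hβ, hαβ, hcomb⟩
    obtain ⟨hq₁A, hq₁sum, hq₁B, hq₁x, hq₁s, hq₁y⟩ := hq₁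
    obtain ⟨hq₂A, hq₂sum, hq₂B, hq₂x, hq₂s, hq₂y⟩ := hq₂
    have hyc : ∀ j, α * q₁.2.2 j + β * q₂.2.2 j = y j := by
      intro j
      have := congrFun (congrArg (fun r => r.2.2) hcomb) j
      simpa [hp.2.2.2.2] using this
    have hy₁ : q₁.2.2 = y := by
      refine hyuniq _ hq₁B hq₁y ?_
      intro j hj
      simp only [Function.mem_support] at hj ⊢
      intro h0
      have := hyc j
      rw [h0] at this
      have h1 := hq₁y j
      have h2 := hq₂y j
      nlinarith [mul_pos hα (lt_of_le_of_ne h1 (Ne.symm hj)), mul_nonneg hβ.le h2]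
    have hy₂ : q₂.2.2 = y := by
      refine hyuniq _ hq₂B hq₂y ?_
      intro j hj
      simp only [Function.mem_support] at hj ⊢
      intro h0
      have := hyc j
      rw [h0] at this
      have h1 := hq₁y j
      have h2 := hq₂y j
      nlinarith [mul_pos hβ (lt_of_le_of_ne h2 (Ne.symm hj)), mul_nonneg hα.le h1]
    exact ⟨hq₁A, by rw [hy₁] at hq₁sum; linarith, hq₁x, hq₁s, hy₁⟩
  refine ⟨hFace, ?_⟩
  -- the affine embedding of `Q(t)` as `F`
  set ψ : (Fin nA ⊕ Unit → ℝ) → ((Fin nA → ℝ) × ℝ × (Fin nB → ℝ)) :=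
    fun z => (fun j => z (Sum.inl j), z (Sum.inr ()), y) with hψ
  have hinj : Function.Injective ψ := by
    intro z₁ z₂ h
    funext j
    rcases j with j | j
    · exact congrFun (congrArg Prod.fst h) j
    · cases j; exact congrArg (fun r => r.2.1) h
  have haff : ∀ α β : ℝ, α + β = 1 → ∀ u v : (Fin nA ⊕ Unit → ℝ),
      ψ (α • u + β • v) = α • ψ u + β • ψ v := by
    intro α β hαβ u v
    simp only [hψ, Prod.smul_mk, Prod.mk_add_mk, Prod.mk.injEq]
    refine ⟨rfl, rfl, ?_⟩
    rw [← add_smul, hαβ, one_smul]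
  set c : Fin mA ⊕ Unit → ℝ := Sum.elim cA (fun _ => t) with hc
  have himg : ψ '' stdPoly (Abar A a) c = F := by
    ext p
    constructor
    · rintro ⟨z, ⟨hz1, hz2⟩, rfl⟩
      refine ⟨?_, ?_, fun i => hz2 (Sum.inl i), hz2 (Sum.inr ()), rfl⟩
      · funext i
        have := congrFun hz1 (Sum.inl i)
        rw [Abar_mulVec_inl] at this
        exact this
      · have := congrFun hz1 (Sum.inr ())
        rw [Abar_mulVec_inr] at this
        exact this
    · rintro ⟨h1, h2, h3, h4, h5⟩
      refine ⟨Sum.elim p.1 (fun _ => p.2.1), ⟨?_, ?_⟩, ?_⟩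
      · funext i
        rcases i with i | i
        · rw [Abar_mulVec_inl]
          exact congrFun h1 i
        · cases i
          rw [Abar_mulVec_inr]
          exact h2
      · rintro (j | j)
        · exact h3 j
        · exact h4
      · simp only [hψ]
        exact Prod.ext rfl (Prod.ext rfl h5.symm)
  have hmemF : ∀ x' : Fin nA → ℝ, ∀ s' : ℝ, (x', s', y) ∈ P → (x', s', y) ∈ F := by
    rintro x' s' ⟨h1, h2, _, h4, h5, _⟩
    exact ⟨h1, by dsimp at h2 ⊢; linarith, h4, h5, rfl⟩
  have hvertF : ∀ p, IsVertex P p → p ∈ F → p ∈ F.extremePoints ℝ := by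
    intro p hp hpF
    exact inter_extremePoints_subset_extremePoints_of_subset hFsub ⟨hpF, hp⟩
  intro x₁ s₁ x₂ s₂ hv₁ hv₂
  have hu₁ : (x₁, s₁, y) ∈ F.extremePoints ℝ := hvertF _ hv₁ (hmemF _ _ hv₁.1)
  have hu₂ : (x₂, s₂, y) ∈ F.extremePoints ℝ := hvertF _ hv₂ (hmemF _ _ hv₂.1)
  rw [← himg, aff_extremePoints hinj haff] at hu₁ hu₂
  obtain ⟨w₁, hw₁, hψ₁⟩ := hu₁
  obtain ⟨w₂, hw₂, hψ₂⟩ := hu₂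
  obtain ⟨N, hN, f, hf0, hfN, hadj⟩ := hdA c w₁ w₂ hw₁ hw₂
  refine ⟨N, hN, fun i => ψ (f i), by simpa [hf0] using hψ₁, by simpa [hfN] using hψ₂, ?_⟩
  intro i hi
  obtain ⟨hne, hvw₁, hvw₂, hext⟩ := hadj i hi
  refine ⟨fun h => hne (hinj h), ?_, ?_, ?_⟩
  · exact hFace.extremePoints_subset_extremePoints
      ((himg ▸ aff_extremePoints hinj haff (stdPoly (Abar A a) c)).symm ▸
        Set.mem_image_of_mem ψ hvw₁)
  · exact hFace.extremePoints_subset_extremePoints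
      ((himg ▸ aff_extremePoints hinj haff (stdPoly (Abar A a) c)).symm ▸
        Set.mem_image_of_mem ψ hvw₂)
  · have h1 := aff_isExtreme hinj haff hext
    rw [himg, aff_image_segment haff] at h1
    exact hFace.trans h1
end
end

section
/- Let 𝒫 be a simple parallel-connection polyhedron of simple polyhedra Q and R, and let (x¹,s¹,y¹), (x²,s²,y²) be vertices of 𝒫 such that y¹ has m₂−1 nonzero coordinates, x² has m₁−1 nonzero coordinates, and a·x² ≤ a·x¹ + s¹. Then the graph distance between these two vertices in 𝒫 is at most diam(Ā) + diam(B̄). -/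
open Set Matrix

noncomputable section

section AuxLemmas

open Function

variable {E F : Type*} [AddCommGroup E] [Module ℝ E] [AddCommGroup F] [Module ℝ F]

lemma extremePoints_image_iff (f : E →ᵃ[ℝ] F) (hf : Function.Injective f) (P : Set E) {v : E}
    (hv : v ∈ P) : f v ∈ (f '' P).extremePoints ℝ ↔ v ∈ P.extremePoints ℝ := by
  constructor
  · rintro ⟨-, h⟩
    refine ⟨hv, fun x₁ h₁ x₂ h₂ hseg => ?_⟩
    have hs : f v ∈ openSegment ℝ (f x₁) (f x₂) := by
      rw [← image_openSegment]; exact ⟨v, hseg, rfl⟩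
    exact hf (h ⟨x₁, h₁, rfl⟩ ⟨x₂, h₂, rfl⟩ hs)
  · rintro ⟨-, h⟩
    refine ⟨⟨v, hv, rfl⟩, ?_⟩
    rintro _ ⟨x₁, h₁, rfl⟩ _ ⟨x₂, h₂, rfl⟩ hseg
    rw [← image_openSegment] at hseg
    obtain ⟨w, hw, hweq⟩ := hseg
    obtain rfl : w = v := hf hweq
    rw [h h₁ h₂ hw]

lemma isExtreme_image (f : E →ᵃ[ℝ] F) (hf : Function.Injective f) {P S : Set E}
    (h : IsExtreme ℝ P S) : IsExtreme ℝ (f '' P) (f '' S) := by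
  refine ⟨Set.image_mono h.1, ?_⟩
  rintro _ ⟨x₁, h₁, rfl⟩ _ ⟨x₂, h₂, rfl⟩ _ ⟨x, hx, rfl⟩ hseg
  rw [← image_openSegment] at hseg
  obtain ⟨w, hw, hweq⟩ := hseg
  obtain rfl : w = x := hf hweq
  exact Set.mem_image_of_mem f (h.2 h₁ h₂ hx hw)

lemma hasWalk_trans {P : Set E} {u v w : E} {k l : ℕ}
    (h1 : HasWalk P u v k) (h2 : HasWalk P v w l) : HasWalk P u w (k + l) := by
  obtain ⟨N, hN, f, hf0, hfN, hfadj⟩ := h1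
  obtain ⟨M, hM, g, hg0, hgM, hgadj⟩ := h2
  refine ⟨N + M, by omega, fun i => if i ≤ N then f i else g (i - N), by simp [hf0], ?_, ?_⟩
  · by_cases hM0 : M = 0
    · subst hM0
      simp only [le_refl, if_pos, Nat.add_zero]
      rw [hfN, ← hg0, hgM]
    · have : ¬ (N + M ≤ N) := by omega
      simp only [this, if_false]
      simpa using hgM
  · intro i hi
    by_cases h : i < N
    · have h1 : i ≤ N := le_of_lt h
      have h2 : i + 1 ≤ N := h
      simp only [h1, h2, if_pos]
      exact hfadj i h
    · have hNi : N ≤ i := le_of_not_gt h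
      have e1 : (if i ≤ N then f i else g (i - N)) = g (i - N) := by
        rcases eq_or_lt_of_le hNi with rfl | hlt
        · simp [hfN, ← hg0]
        · have : ¬ i ≤ N := by omega
          simp [this]
      have e2 : (if i + 1 ≤ N then f (i + 1) else g (i + 1 - N)) = g (i - N + 1) := by
        have : ¬ i + 1 ≤ N := by omega
        simp only [this, if_false]
        congr 1
        omega
      show Adj P (if i ≤ N then f i else g (i - N)) (if i + 1 ≤ N then f (i + 1) else g (i + 1 - N))
      rw [e1, e2]
      exact hgadj (i - N) (by omega)

lemma walk_of_slice {P : Set F} {Q : Set E} (f : E →ᵃ[ℝ] F) (hf : Function.Injective f)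
    (hext : IsExtreme ℝ P (f '' Q)) {k : ℕ} (hdiam : DiamLE Q k)
    {u v : E} (hu : u ∈ Q) (hv : v ∈ Q)
    (huP : IsVertex P (f u)) (hvP : IsVertex P (f v)) :
    HasWalk P (f u) (f v) k := by
  have hQP : f '' Q ⊆ P := hext.1
  have hvertQ : ∀ z ∈ Q, IsVertex P (f z) → IsVertex Q z := by
    intro z hz hzP
    show z ∈ Set.extremePoints ℝ Q
    rw [← extremePoints_image_iff f hf Q hz]
    exact inter_extremePoints_subset_extremePoints_of_subset hQP
      ⟨Set.mem_image_of_mem f hz, hzP⟩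
  have hadj : ∀ a b, Adj Q a b → Adj P (f a) (f b) := by
    rintro a b ⟨hne, ha, hb, hseg⟩
    refine ⟨fun h => hne (hf h), ?_, ?_, ?_⟩
    · exact hext.extremePoints_subset_extremePoints
        ((extremePoints_image_iff f hf Q (extremePoints_subset ha)).2 ha)
    · exact hext.extremePoints_subset_extremePoints
        ((extremePoints_image_iff f hf Q (extremePoints_subset hb)).2 hb)
    · have := isExtreme_image f hf hseg
      rw [image_segment] at this
      exact hext.trans this
  obtain ⟨N, hN, g, hg0, hgN, hgadj⟩ := hdiam u v (hvertQ u hu huP) (hvertQ v hv hvP)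
  exact ⟨N, hN, f ∘ g, by simp [hg0], by simp [hgN],
    fun i hi => hadj _ _ (hgadj i hi)⟩

end AuxLemmas

section MinSupp

variable {ι κ : Type*} [Fintype ι] [Fintype κ] {M : Matrix ι κ ℝ} {c : ι → ℝ} {m : ℕ}

lemma minSupp_eq (hmin : ∀ x ∈ stdPoly M c, m ≤ suppCard x)
    {x z : κ → ℝ} (hx : x ∈ stdPoly M c) (hxm : suppCard x = m)
    (hz : z ∈ stdPoly M c) (hsupp : ∀ j, x j = 0 → z j = 0) : z = x := by
  by_contra hne
  set d : κ → ℝ := z - x with hd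
  have hdsupp : ∀ j, x j = 0 → d j = 0 := fun j hj => by
    simp [hd, hj, hsupp j hj]
  obtain ⟨j₀, hj₀⟩ : ∃ j, d j ≠ 0 := by
    by_contra h
    push_neg at h
    exact hne (by funext j; have := h j; simpa [hd, sub_eq_zero] using this)
  set S : Finset κ := Finset.univ.filter (fun j => d j ≠ 0) with hS
  have hj₀S : j₀ ∈ S := by simp [hS, hj₀]
  obtain ⟨j₁, hj₁S, hj₁min⟩ := S.exists_min_image (fun j => |x j / d j|) ⟨j₀, hj₀S⟩
  have hdj₁ : d j₁ ≠ 0 := by simpa [hS] using hj₁S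
  have hxj₁ : x j₁ ≠ 0 := fun h => hdj₁ (hdsupp j₁ h)
  set t : ℝ := -(x j₁ / d j₁) with ht
  set w : κ → ℝ := x + t • d with hw
  have hwpoly : w ∈ stdPoly M c := by
    constructor
    · have : M.mulVec d = 0 := by
        simp [hd, sub_eq_add_neg, Matrix.mulVec_add, Matrix.mulVec_neg, hz.1, hx.1]
      simp [hw, Matrix.mulVec_add, Matrix.mulVec_smul, this, hx.1]
    · intro j
      by_cases hdj : d j = 0
      · simp only [hw, Pi.add_apply, Pi.smul_apply, smul_eq_mul, hdj, mul_zero, add_zero]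
        exact hx.2 j
      · have hjS : j ∈ S := by simp [hS, hdj]
        have hle : |x j₁ / d j₁| ≤ |x j / d j| := hj₁min j hjS
        have hxj : 0 ≤ x j := hx.2 j
        have h1 : |t * d j| ≤ x j := by
          have habs : |t| = |x j₁ / d j₁| := by rw [ht, abs_neg]
          calc |t * d j| = |t| * |d j| := abs_mul _ _
            _ ≤ |x j / d j| * |d j| := by
                rw [habs]
                exact mul_le_mul_of_nonneg_right hle (abs_nonneg _)
            _ = |x j| := by rw [abs_div, div_mul_cancel₀ _ (abs_ne_zero.2 hdj)]
            _ = x j := abs_of_nonneg hxj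
        have := neg_abs_le (t * d j)
        simp only [hw, Pi.add_apply, Pi.smul_apply, smul_eq_mul]
        linarith
  have hwj₁ : w j₁ = 0 := by
    simp only [hw, ht, Pi.add_apply, Pi.smul_apply, smul_eq_mul]
    field_simp
    ring
  have hsub : Function.support w ⊆ Function.support x \ {j₁} := by
    intro j hj
    constructor
    · intro hxj
      exact hj (by simp [hw, hdsupp j hxj, hxj])
    · intro hj'
      exact hj (by simp only [Set.mem_singleton_iff] at hj'; rw [hj']; exact hwj₁)
  have hfin : (Function.support x).Finite := Set.toFinite _
  have hlt : suppCard w < suppCard x := by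
    have h1 : suppCard w ≤ (Function.support x \ {j₁}).ncard :=
      Set.ncard_le_ncard hsub hfin.diff
    have h2 : (Function.support x \ {j₁}).ncard < (Function.support x).ncard :=
      Set.ncard_diff_singleton_lt_of_mem hxj₁ hfin
    exact lt_of_le_of_lt h1 h2
  have := hmin w hwpoly
  omega

lemma minSupp_extreme (hmin : ∀ x ∈ stdPoly M c, m ≤ suppCard x)
    {x : κ → ℝ} (hx : x ∈ stdPoly M c) (hxm : suppCard x = m) :
    x ∈ (stdPoly M c).extremePoints ℝ := by
  refine ⟨hx, fun p hp q hq hseg => ?_⟩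
  obtain ⟨α, β, hα, hβ, hαβ, heq⟩ := hseg
  have hcomb : ∀ j, α * p j + β * q j = x j := fun j => by
    have := congrFun heq j
    simpa using this
  have key : ∀ y, y ∈ stdPoly M c → y = p ∨ y = q → y = x := by
    rintro y hy (rfl | rfl) <;>
    · refine minSupp_eq hmin hx hxm hy fun j hj => ?_
      have h1 := hcomb j
      have h2 := hp.2 j
      have h3 := hq.2 j
      rw [hj] at h1
      nlinarith
  exact key p hp (Or.inl rfl)

end MinSupp

section BarLemmas

lemma Abar_mulVec {mA nA : ℕ} (A : Matrix (Fin mA) (Fin nA) ℝ) (a : Fin nA → ℝ)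
    (z : (Fin nA ⊕ Unit) → ℝ) :
    (Abar A a).mulVec z = Sum.elim (A.mulVec (fun j => z (Sum.inl j)))
      (fun _ => a ⬝ᵥ (fun j => z (Sum.inl j)) + z (Sum.inr ())) := by
  funext i
  cases i with
  | inl i => simp [Abar, Matrix.mulVec, dotProduct, Fintype.sum_sum_type]
  | inr u => simp [Abar, Matrix.mulVec, dotProduct, Fintype.sum_sum_type]

lemma Bbar_mulVec {mB nB : ℕ} (B : Matrix (Fin mB) (Fin nB) ℝ) (b : Fin nB → ℝ)
    (z : (Unit ⊕ Fin nB) → ℝ) :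
    (Bbar B b).mulVec z = Sum.elim
      (fun _ => z (Sum.inl ()) + b ⬝ᵥ (fun j => z (Sum.inr j)))
      (B.mulVec (fun j => z (Sum.inr j))) := by
  funext i
  cases i with
  | inl u => simp [Bbar, Matrix.mulVec, dotProduct, Fintype.sum_sum_type]
  | inr i => simp [Bbar, Matrix.mulVec, dotProduct, Fintype.sum_sum_type]

def sliceMapA {nA nB : ℕ} (y₁ : Fin nB → ℝ) :
    ((Fin nA ⊕ Unit) → ℝ) →ᵃ[ℝ] ((Fin nA → ℝ) × ℝ × (Fin nB → ℝ)) where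
  toFun := fun z => (fun i => z (Sum.inl i), z (Sum.inr ()), y₁)
  linear :=
    { toFun := fun z => (fun i => z (Sum.inl i), z (Sum.inr ()), 0)
      map_add' := by intro x y; refine Prod.ext rfl (Prod.ext rfl ?_); simp
      map_smul' := by intro r x; refine Prod.ext rfl (Prod.ext rfl ?_); simp }
  map_vadd' := by
    intro p v
    refine Prod.ext rfl (Prod.ext rfl ?_)
    show y₁ = 0 + y₁
    simp

@[simp] lemma sliceMapA_apply {nA nB : ℕ} (y₁ : Fin nB → ℝ) (z : (Fin nA ⊕ Unit) → ℝ) :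
    sliceMapA y₁ z = (fun i => z (Sum.inl i), z (Sum.inr ()), y₁) := rfl

lemma sliceMapA_inj {nA nB : ℕ} (y₁ : Fin nB → ℝ) :
    Function.Injective (sliceMapA (nA := nA) y₁) := by
  intro z z' h
  funext j
  cases j with
  | inl i => exact congrFun (congrArg Prod.fst h) i
  | inr u => cases u; exact congrArg (fun p => p.2.1) h

def sliceMapB {nA nB : ℕ} (x₂ : Fin nA → ℝ) :
    ((Unit ⊕ Fin nB) → ℝ) →ᵃ[ℝ] ((Fin nA → ℝ) × ℝ × (Fin nB → ℝ)) where
  toFun := fun z => (x₂, z (Sum.inl ()), fun j => z (Sum.inr j))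
  linear :=
    { toFun := fun z => (0, z (Sum.inl ()), fun j => z (Sum.inr j))
      map_add' := by intro x y; refine Prod.ext ?_ (Prod.ext rfl rfl); simp
      map_smul' := by intro r x; refine Prod.ext ?_ (Prod.ext rfl rfl); simp }
  map_vadd' := by
    intro p v
    refine Prod.ext ?_ (Prod.ext rfl rfl)
    show x₂ = 0 + x₂
    simp

@[simp] lemma sliceMapB_apply {nA nB : ℕ} (x₂ : Fin nA → ℝ) (z : (Unit ⊕ Fin nB) → ℝ) :
    sliceMapB x₂ z = (x₂, z (Sum.inl ()), fun j => z (Sum.inr j)) := rfl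

lemma sliceMapB_inj {nA nB : ℕ} (x₂ : Fin nA → ℝ) :
    Function.Injective (sliceMapB (nB := nB) x₂) := by
  intro z z' h
  funext j
  cases j with
  | inl u => cases u; exact congrArg (fun p => p.2.1) h
  | inr i => exact congrFun (congrArg (fun p => p.2.2) h) i

end BarLemmas

/-- Let `𝒫` be the simple parallel-connection polyhedron of simple `Q`
and `R`, and let `(x¹, s¹, y¹)`, `(x², s², y²)` be vertices of `𝒫` such that `y¹` has
`m₂ - 1 = mB` nonzero coordinates, `x²` has `m₁ - 1 = mA` nonzero coordinates, and
`a·x² ≤ a·x¹ + s¹`.  Then the graph distance between the two vertices in `𝒫` is at most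
`diam(Ā) + diam(B̄)`. -/
theorem parallel_mixed_distance {mA nA mB nB : ℕ}
    (A : Matrix (Fin mA) (Fin nA) ℝ) (a : Fin nA → ℝ)
    (B : Matrix (Fin mB) (Fin nB) ℝ) (b : Fin nB → ℝ)
    (cA : Fin mA → ℝ) (ca cb : ℝ) (cB : Fin mB → ℝ)
    (hA : ∀ x : Fin nA → ℝ, A.mulVec x = cA → (∀ i, 0 ≤ x i) → mA ≤ suppCard x)
    (hB : ∀ y : Fin nB → ℝ, B.mulVec y = cB → (∀ j, 0 ≤ y j) → mB ≤ suppCard y)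
    (hsimple : ∀ p, IsVertex (parallelPoly A a B b cA ca cb cB) p →
      pSupp p = mA + mB + 1)
    (dA dB : ℕ) (hdA : MatDiamLE (Abar A a) dA) (hdB : MatDiamLE (Bbar B b) dB)
    (x₁ : Fin nA → ℝ) (s₁ : ℝ) (y₁ : Fin nB → ℝ)
    (x₂ : Fin nA → ℝ) (s₂ : ℝ) (y₂ : Fin nB → ℝ)
    (hv₁ : IsVertex (parallelPoly A a B b cA ca cb cB) (x₁, s₁, y₁))
    (hv₂ : IsVertex (parallelPoly A a B b cA ca cb cB) (x₂, s₂, y₂))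
    (hy₁ : suppCard y₁ = mB) (hx₂ : suppCard x₂ = mA)
    (hineq : a ⬝ᵥ x₂ ≤ a ⬝ᵥ x₁ + s₁) :
    HasWalk (parallelPoly A a B b cA ca cb cB) (x₁, s₁, y₁) (x₂, s₂, y₂) (dA + dB) := by
  set P := parallelPoly A a B b cA ca cb cB with hP
  obtain ⟨hm₁A, hm₁lin, hm₁B, hm₁x, hm₁s, hm₁y⟩ := hv₁.1
  obtain ⟨hm₂A, hm₂lin, hm₂B, hm₂x, hm₂s, hm₂y⟩ := hv₂.1
  -- the component points are extreme in their own polyhedra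
  have hy₁R : y₁ ∈ stdPoly B cB := ⟨hm₁B, hm₁y⟩
  have hx₂Q : x₂ ∈ stdPoly A cA := ⟨hm₂A, hm₂x⟩
  have hBmin : ∀ y ∈ stdPoly B cB, mB ≤ suppCard y := fun y hy => hB y hy.1 hy.2
  have hAmin : ∀ x ∈ stdPoly A cA, mA ≤ suppCard x := fun x hx => hA x hx.1 hx.2
  have hy₁ext : y₁ ∈ (stdPoly B cB).extremePoints ℝ := minSupp_extreme hBmin hy₁R hy₁
  have hx₂ext : x₂ ∈ (stdPoly A cA).extremePoints ℝ := minSupp_extreme hAmin hx₂Q hx₂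
  -- the intermediate point
  set s' : ℝ := ca + cb - a ⬝ᵥ x₂ - b ⬝ᵥ y₁ with hs'def
  have hs' : 0 ≤ s' := by rw [hs'def]; linarith
  have hmidP : ((x₂, s', y₁) : (Fin nA → ℝ) × ℝ × (Fin nB → ℝ)) ∈ P :=
    ⟨hm₂A, by rw [hs'def]; ring, hm₁B, hm₂x, hs', hm₁y⟩
  -- the intermediate point is a vertex of P
  have hmidvert : IsVertex P (x₂, s', y₁) := by
    refine ⟨hmidP, ?_⟩
    rintro p hp q hq ⟨α, β, hα, hβ, hαβ, heq⟩
    have h1 : α • p.1 + β • q.1 = x₂ := congrArg Prod.fst heq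
    have h3 : α • p.2.2 + β • q.2.2 = y₁ := congrArg (fun w => w.2.2) heq
    have hpx := hx₂ext.2 ⟨hp.1, hp.2.2.2.1⟩ ⟨hq.1, hq.2.2.2.1⟩ ⟨α, β, hα, hβ, hαβ, h1⟩
    have hpy := hy₁ext.2 ⟨hp.2.2.1, hp.2.2.2.2.2⟩ ⟨hq.2.2.1, hq.2.2.2.2.2⟩
      ⟨α, β, hα, hβ, hαβ, h3⟩
    have hps : p.2.1 = s' := by
      have := hp.2.1
      rw [hpx, hpy] at this
      rw [hs'def]; linarith
    exact Prod.ext hpx (Prod.ext hps hpy)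
  -- the slice `y = y₁` is extreme in P
  have hsliceA : IsExtreme ℝ P {p ∈ P | p.2.2 = y₁} := by
    refine ⟨fun p hp => hp.1, ?_⟩
    rintro p hp q hq r ⟨hr, hry⟩ ⟨α, β, hα, hβ, hαβ, heq⟩
    have h3 : α • p.2.2 + β • q.2.2 = y₁ := by
      have := congrArg (fun w => w.2.2) heq
      simpa [hry] using this
    have h1 := hy₁ext.2 ⟨hp.2.2.1, hp.2.2.2.2.2⟩ ⟨hq.2.2.1, hq.2.2.2.2.2⟩
      ⟨α, β, hα, hβ, hαβ, h3⟩
    exact ⟨hp, h1⟩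
  -- the slice `x = x₂` is extreme in P
  have hsliceB : IsExtreme ℝ P {p ∈ P | p.1 = x₂} := by
    refine ⟨fun p hp => hp.1, ?_⟩
    rintro p hp q hq r ⟨hr, hrx⟩ ⟨α, β, hα, hβ, hαβ, heq⟩
    have h1 : α • p.1 + β • q.1 = x₂ := by
      have := congrArg Prod.fst heq
      simpa [hrx] using this
    have h2 := hx₂ext.2 ⟨hp.1, hp.2.2.2.1⟩ ⟨hq.1, hq.2.2.2.1⟩ ⟨α, β, hα, hβ, hαβ, h1⟩
    exact ⟨hp, h2⟩
  -- the slice `y = y₁` as an image of a standard polyhedron of Ā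
  set cA' : (Fin mA ⊕ Unit) → ℝ := Sum.elim cA (fun _ => ca + cb - b ⬝ᵥ y₁) with hcA'
  have himgA : sliceMapA y₁ '' stdPoly (Abar A a) cA' = {p ∈ P | p.2.2 = y₁} := by
    ext p
    constructor
    · rintro ⟨z, ⟨hz1, hz2⟩, rfl⟩
      rw [Abar_mulVec] at hz1
      have h1 : A.mulVec (fun j => z (Sum.inl j)) = cA := by
        funext i
        have := congrFun hz1 (Sum.inl i)
        simpa [hcA'] using this
      have h2 : a ⬝ᵥ (fun j => z (Sum.inl j)) + z (Sum.inr ()) = ca + cb - b ⬝ᵥ y₁ := by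
        have := congrFun hz1 (Sum.inr ())
        simpa [hcA'] using this
      refine ⟨⟨h1, by simp only [sliceMapA_apply]; linarith, hm₁B,
        fun i => hz2 (Sum.inl i), hz2 (Sum.inr ()), hm₁y⟩, rfl⟩
    · rintro ⟨⟨h1, h2, h3, h4, h5, h6⟩, hy⟩
      refine ⟨Sum.elim p.1 (fun _ => p.2.1), ⟨?_, ?_⟩, ?_⟩
      · rw [Abar_mulVec]
        funext i
        cases i with
        | inl i =>
          simp only [Sum.elim_inl, hcA']
          exact congrFun h1 i
        | inr u =>
          simp only [Sum.elim_inr, hcA']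
          show a ⬝ᵥ p.1 + p.2.1 = ca + cb - b ⬝ᵥ y₁
          rw [hy] at h2
          linarith
      · intro j
        cases j with
        | inl i => exact h4 i
        | inr u => exact h5
      · refine Prod.ext rfl (Prod.ext rfl ?_)
        exact hy.symm
  -- the slice `x = x₂` as an image of a standard polyhedron of B̄
  set cB' : (Unit ⊕ Fin mB) → ℝ := Sum.elim (fun _ => ca + cb - a ⬝ᵥ x₂) cB with hcB'
  have himgB : sliceMapB x₂ '' stdPoly (Bbar B b) cB' = {p ∈ P | p.1 = x₂} := by
    ext p
    constructor
    · rintro ⟨z, ⟨hz1, hz2⟩, rfl⟩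
      rw [Bbar_mulVec] at hz1
      have h1 : B.mulVec (fun j => z (Sum.inr j)) = cB := by
        funext i
        have := congrFun hz1 (Sum.inr i)
        simpa [hcB'] using this
      have h2 : z (Sum.inl ()) + b ⬝ᵥ (fun j => z (Sum.inr j)) = ca + cb - a ⬝ᵥ x₂ := by
        have := congrFun hz1 (Sum.inl ())
        simpa [hcB'] using this
      refine ⟨⟨hm₂A, by simp only [sliceMapB_apply]; linarith, h1,
        hm₂x, hz2 (Sum.inl ()), fun j => hz2 (Sum.inr j)⟩, rfl⟩
    · rintro ⟨⟨h1, h2, h3, h4, h5, h6⟩, hx⟩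
      refine ⟨Sum.elim (fun _ => p.2.1) p.2.2, ⟨?_, ?_⟩, ?_⟩
      · rw [Bbar_mulVec]
        funext i
        cases i with
        | inl u =>
          simp only [Sum.elim_inl, hcB']
          show p.2.1 + b ⬝ᵥ p.2.2 = ca + cb - a ⬝ᵥ x₂
          rw [hx] at h2
          linarith
        | inr i =>
          simp only [Sum.elim_inr, hcB']
          exact congrFun h3 i
      · intro j
        cases j with
        | inl u => exact h5
        | inr i => exact h6 i
      · refine Prod.ext hx.symm (Prod.ext rfl rfl)
  -- endpoints in the A-slice polyhedron
  set uA : (Fin nA ⊕ Unit) → ℝ := Sum.elim x₁ (fun _ => s₁) with huA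
  set vA : (Fin nA ⊕ Unit) → ℝ := Sum.elim x₂ (fun _ => s') with hvA
  have huAmem : uA ∈ stdPoly (Abar A a) cA' := by
    constructor
    · rw [Abar_mulVec]
      funext i
      cases i with
      | inl i =>
        simp only [Sum.elim_inl, hcA', huA]
        exact congrFun hm₁A i
      | inr u =>
        simp only [Sum.elim_inr, hcA', huA]
        show a ⬝ᵥ x₁ + s₁ = ca + cb - b ⬝ᵥ y₁
        linarith
    · intro j
      cases j with
      | inl i => exact hm₁x i
      | inr u => exact hm₁s
  have hvAmem : vA ∈ stdPoly (Abar A a) cA' := by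
    constructor
    · rw [Abar_mulVec]
      funext i
      cases i with
      | inl i =>
        simp only [Sum.elim_inl, hcA', hvA]
        exact congrFun hm₂A i
      | inr u =>
        simp only [Sum.elim_inr, hcA', hvA]
        show a ⬝ᵥ x₂ + s' = ca + cb - b ⬝ᵥ y₁
        rw [hs'def]; ring
    · intro j
      cases j with
      | inl i => exact hm₂x i
      | inr u => exact hs'
  have hfuA : sliceMapA y₁ uA = (x₁, s₁, y₁) := rfl
  have hfvA : sliceMapA y₁ vA = (x₂, s', y₁) := rfl
  -- endpoints in the B-slice polyhedron
  set uB : (Unit ⊕ Fin nB) → ℝ := Sum.elim (fun _ => s') y₁ with huB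
  set vB : (Unit ⊕ Fin nB) → ℝ := Sum.elim (fun _ => s₂) y₂ with hvB
  have huBmem : uB ∈ stdPoly (Bbar B b) cB' := by
    constructor
    · rw [Bbar_mulVec]
      funext i
      cases i with
      | inl u =>
        simp only [Sum.elim_inl, hcB', huB]
        show s' + b ⬝ᵥ y₁ = ca + cb - a ⬝ᵥ x₂
        rw [hs'def]; ring
      | inr i =>
        simp only [Sum.elim_inr, hcB', huB]
        exact congrFun hm₁B i
    · intro j
      cases j with
      | inl u => exact hs'
      | inr i => exact hm₁y i
  have hvBmem : vB ∈ stdPoly (Bbar B b) cB' := by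
    constructor
    · rw [Bbar_mulVec]
      funext i
      cases i with
      | inl u =>
        simp only [Sum.elim_inl, hcB', hvB]
        show s₂ + b ⬝ᵥ y₂ = ca + cb - a ⬝ᵥ x₂
        linarith
      | inr i =>
        simp only [Sum.elim_inr, hcB', hvB]
        exact congrFun hm₂B i
    · intro j
      cases j with
      | inl u => exact hm₂s
      | inr i => exact hm₂y i
  have hguB : sliceMapB x₂ uB = (x₂, s', y₁) := by
    refine Prod.ext rfl (Prod.ext rfl ?_)
    funext j; rfl
  have hgvB : sliceMapB x₂ vB = (x₂, s₂, y₂) := by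
    refine Prod.ext rfl (Prod.ext rfl ?_)
    funext j; rfl
  -- the two walks
  have hextA : IsExtreme ℝ P (sliceMapA y₁ '' stdPoly (Abar A a) cA') := by
    rw [himgA]; exact hsliceA
  have hextB : IsExtreme ℝ P (sliceMapB x₂ '' stdPoly (Bbar B b) cB') := by
    rw [himgB]; exact hsliceB
  have walkA : HasWalk P (x₁, s₁, y₁) (x₂, s', y₁) dA := by
    have := walk_of_slice (sliceMapA y₁) (sliceMapA_inj y₁) hextA (hdA cA')
      huAmem hvAmem (by rw [hfuA]; exact hv₁) (by rw [hfvA]; exact hmidvert)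
    rwa [hfuA, hfvA] at this
  have walkB : HasWalk P (x₂, s', y₁) (x₂, s₂, y₂) dB := by
    have := walk_of_slice (sliceMapB x₂) (sliceMapB_inj x₂) hextB (hdB cB')
      huBmem hvBmem (by rw [hguB]; exact hmidvert) (by rw [hgvB]; exact hv₂)
    rwa [hguB, hgvB] at this
  exact hasWalk_trans walkA walkB
end
end

section
/- Let 𝒮 be the series-connection polyhedron of integral simple polyhedra Q and R, and suppose s takes a common fixed extreme value s* = s_min (or s* = s_max, assumed finite and attained) at two vertices (x¹,s*,y¹) and (x²,s*,y²) of 𝒮. Then the set 𝒮' = {(x,y) ≥ 0 : Ax = c_A, a·x = c_a − s*, b·y = c_b − s*, By = c_B} is a face of 𝒮, 𝒮' is the Cartesian product of {(x) ≥ 0 : Ax = c_A, a·x = c_a − s*} and {(y) ≥ 0 : b·y = c_b − s*, By = c_B}, and hence the graph distance in 𝒮 between the two vertices is at most the sum of the diameters of these two factor polyhedra. -/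
open Set Matrix

noncomputable section

/-- The series-connection polyhedron `𝒮`, with points written `(x, s, y)`. -/
def seriesPoly {mA nA mB nB : ℕ} (A : Matrix (Fin mA) (Fin nA) ℝ) (a : Fin nA → ℝ)
    (B : Matrix (Fin mB) (Fin nB) ℝ) (b : Fin nB → ℝ)
    (cA : Fin mA → ℝ) (ca cb : ℝ) (cB : Fin mB → ℝ) :
    Set ((Fin nA → ℝ) × ℝ × (Fin nB → ℝ)) :=
  {p | A.mulVec p.1 = cA ∧ a ⬝ᵥ p.1 + p.2.1 = ca ∧ p.2.1 + b ⬝ᵥ p.2.2 = cb ∧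
       B.mulVec p.2.2 = cB ∧ (∀ i, 0 ≤ p.1 i) ∧ 0 ≤ p.2.1 ∧ ∀ j, 0 ≤ p.2.2 j}

section MyAux

variable {E G : Type*} [AddCommGroup E] [Module ℝ E] [AddCommGroup G] [Module ℝ G]

private lemma myIsExtreme_prod {P P' : Set E} {Q Q' : Set G}
    (h1 : IsExtreme ℝ P P') (h2 : IsExtreme ℝ Q Q') :
    IsExtreme ℝ (P ×ˢ Q) (P' ×ˢ Q') := by
  refine ⟨Set.prod_mono h1.1 h2.1, ?_⟩
  rintro p ⟨hp1, hp2⟩ q ⟨hq1, hq2⟩ z ⟨hz1, hz2⟩ ⟨c, d, hc, hd, hcd, hzeq⟩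
  have e1 := h1.2 hp1 hq1 hz1 ⟨c, d, hc, hd, hcd, by
    simpa using congrArg Prod.fst hzeq⟩
  have e2 := h2.2 hp2 hq2 hz2 ⟨c, d, hc, hd, hcd, by
    simpa using congrArg Prod.snd hzeq⟩
  exact ⟨e1, e2⟩

private lemma mySegment_prod_left (u v : E) (w : G) :
    segment ℝ ((u, w) : E × G) (v, w) = segment ℝ u v ×ˢ {w} := by
  ext z
  constructor
  · rintro ⟨c, d, hc, hd, hcd, rfl⟩
    refine ⟨⟨c, d, hc, hd, hcd, by simp⟩, ?_⟩
    show c • w + d • w = w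
    rw [← add_smul, hcd, one_smul]
  · rintro ⟨⟨c, d, hc, hd, hcd, hz1⟩, hz2⟩
    refine ⟨c, d, hc, hd, hcd, ?_⟩
    have hz2' : z.2 = w := hz2
    refine Prod.ext (by simpa using hz1) ?_
    show c • w + d • w = z.2
    rw [← add_smul, hcd, one_smul, hz2']

private lemma mySegment_prod_right (w : E) (u v : G) :
    segment ℝ ((w, u) : E × G) (w, v) = {w} ×ˢ segment ℝ u v := by
  ext z
  constructor
  · rintro ⟨c, d, hc, hd, hcd, rfl⟩
    refine ⟨?_, ⟨c, d, hc, hd, hcd, by simp⟩⟩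
    show c • w + d • w = w
    rw [← add_smul, hcd, one_smul]
  · rintro ⟨hz1, ⟨c, d, hc, hd, hcd, hz2⟩⟩
    refine ⟨c, d, hc, hd, hcd, ?_⟩
    have hz1' : z.1 = w := hz1
    refine Prod.ext ?_ (by simpa using hz2)
    show c • w + d • w = z.1
    rw [← add_smul, hcd, one_smul, hz1']

private lemma myAdj_prod_left {P : Set E} {Q : Set G} {u v : E} {w : G}
    (h : Adj P u v) (hw : w ∈ Set.extremePoints ℝ Q) :
    Adj (P ×ˢ Q) (u, w) (v, w) := by
  obtain ⟨hne, hu, hv, hseg⟩ := h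
  refine ⟨fun hcontra => hne (congrArg Prod.fst hcontra), ?_, ?_, ?_⟩
  · rw [IsVertex, extremePoints_prod]; exact ⟨hu, hw⟩
  · rw [IsVertex, extremePoints_prod]; exact ⟨hv, hw⟩
  · rw [mySegment_prod_left]
    exact myIsExtreme_prod hseg (isExtreme_singleton.2 hw)

private lemma myAdj_prod_right {P : Set E} {Q : Set G} {w : E} {u v : G}
    (h : Adj Q u v) (hw : w ∈ Set.extremePoints ℝ P) :
    Adj (P ×ˢ Q) (w, u) (w, v) := by
  obtain ⟨hne, hu, hv, hseg⟩ := h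
  refine ⟨fun hcontra => hne (congrArg Prod.snd hcontra), ?_, ?_, ?_⟩
  · rw [IsVertex, extremePoints_prod]; exact ⟨hw, hu⟩
  · rw [IsVertex, extremePoints_prod]; exact ⟨hw, hv⟩
  · rw [mySegment_prod_right]
    exact myIsExtreme_prod (isExtreme_singleton.2 hw) hseg

private lemma myAdj_of_face {S F : Set E} (hSF : IsExtreme ℝ S F) {u v : E}
    (h : Adj F u v) : Adj S u v :=
  ⟨h.1, hSF.extremePoints_subset_extremePoints h.2.1,
    hSF.extremePoints_subset_extremePoints h.2.2.1, hSF.trans h.2.2.2⟩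

end MyAux

/-- Let `𝒮` be the series-connection polyhedron and `s*` a common
extreme value of the shared variable (`s* = s_min` or `s* = s_max` over `𝒮`), taken by two
vertices `(x¹, s*, y¹)` and `(x², s*, y²)` of `𝒮`.  Then the set `𝒮' = {s = s*} ∩ 𝒮` is a
face of `𝒮`, it is (after dropping the fixed coordinate) the Cartesian product of
`{x ≥ 0 : Ax = c_A, a·x = c_a - s*}` and `{y ≥ 0 : b·y = c_b - s*, By = c_B}`, and hence
the graph distance in `𝒮` between the two vertices is at most the sum of the diameters of
these two factor polyhedra. -/
theorem series_extreme_face {mA nA mB nB : ℕ}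
    (A : Matrix (Fin mA) (Fin nA) ℝ) (a : Fin nA → ℝ)
    (B : Matrix (Fin mB) (Fin nB) ℝ) (b : Fin nB → ℝ)
    (cA : Fin mA → ℝ) (ca cb : ℝ) (cB : Fin mB → ℝ)
    (sstar : ℝ)
    (hext : (∀ p ∈ seriesPoly A a B b cA ca cb cB, sstar ≤ p.2.1) ∨
            (∀ p ∈ seriesPoly A a B b cA ca cb cB, p.2.1 ≤ sstar))
    (x₁ : Fin nA → ℝ) (y₁ : Fin nB → ℝ) (x₂ : Fin nA → ℝ) (y₂ : Fin nB → ℝ)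
    (hv₁ : IsVertex (seriesPoly A a B b cA ca cb cB) (x₁, sstar, y₁))
    (hv₂ : IsVertex (seriesPoly A a B b cA ca cb cB) (x₂, sstar, y₂))
    (d₁ d₂ : ℕ)
    (hd₁ : DiamLE {x : Fin nA → ℝ | A.mulVec x = cA ∧ a ⬝ᵥ x = ca - sstar ∧
      ∀ i, 0 ≤ x i} d₁)
    (hd₂ : DiamLE {y : Fin nB → ℝ | b ⬝ᵥ y = cb - sstar ∧ B.mulVec y = cB ∧
      ∀ j, 0 ≤ y j} d₂) :
    IsExtreme ℝ (seriesPoly A a B b cA ca cb cB)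
      {p ∈ seriesPoly A a B b cA ca cb cB | p.2.1 = sstar} ∧
    {p ∈ seriesPoly A a B b cA ca cb cB | p.2.1 = sstar} =
      {p : (Fin nA → ℝ) × ℝ × (Fin nB → ℝ) |
        p.1 ∈ {x : Fin nA → ℝ | A.mulVec x = cA ∧ a ⬝ᵥ x = ca - sstar ∧ ∀ i, 0 ≤ x i} ∧
        p.2.1 = sstar ∧
        p.2.2 ∈ {y : Fin nB → ℝ | b ⬝ᵥ y = cb - sstar ∧ B.mulVec y = cB ∧
          ∀ j, 0 ≤ y j}} ∧
    HasWalk (seriesPoly A a B b cA ca cb cB) (x₁, sstar, y₁) (x₂, sstar, y₂)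
      (d₁ + d₂) := by
  set S := seriesPoly A a B b cA ca cb cB with hSdef
  set P₁ : Set (Fin nA → ℝ) :=
    {x : Fin nA → ℝ | A.mulVec x = cA ∧ a ⬝ᵥ x = ca - sstar ∧ ∀ i, 0 ≤ x i} with hP₁def
  set P₂ : Set (Fin nB → ℝ) :=
    {y : Fin nB → ℝ | b ⬝ᵥ y = cb - sstar ∧ B.mulVec y = cB ∧ ∀ j, 0 ≤ y j} with hP₂def
  have hs0 : (0 : ℝ) ≤ sstar := hv₁.1.2.2.2.2.2.1
  -- Part 1: the face
  have hface : IsExtreme ℝ S {p ∈ S | p.2.1 = sstar} := by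
    refine ⟨fun p hp => hp.1, ?_⟩
    rintro p hp q hq z ⟨hzS, hz⟩ ⟨c, d, hc, hd, hcd, hzeq⟩
    have hzs : c * p.2.1 + d * q.2.1 = sstar := by
      have h := congrArg (fun r : (Fin nA → ℝ) × ℝ × (Fin nB → ℝ) => r.2.1) hzeq
      simpa [smul_eq_mul, hz] using h
    rcases hext with hmin | hmax
    · have h1 := hmin p hp
      have h2 := hmin q hq
      have hp' : p.2.1 = sstar := by nlinarith
      have hq' : q.2.1 = sstar := by nlinarith
      exact ⟨hp, hp'⟩
    · have h1 := hmax p hp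
      have h2 := hmax q hq
      have hp' : p.2.1 = sstar := by nlinarith
      have hq' : q.2.1 = sstar := by nlinarith
      exact ⟨hp, hp'⟩
  -- Part 2: the product decomposition
  have heq : {p ∈ S | p.2.1 = sstar} =
      {p : (Fin nA → ℝ) × ℝ × (Fin nB → ℝ) | p.1 ∈ P₁ ∧ p.2.1 = sstar ∧ p.2.2 ∈ P₂} := by
    ext p
    simp only [hSdef, hP₁def, hP₂def, seriesPoly, Set.mem_setOf_eq, Set.sep_setOf]
    constructor
    · rintro ⟨⟨h1, h2, h3, h4, h5, h6, h7⟩, hs⟩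
      exact ⟨⟨h1, by linarith, h5⟩, hs, ⟨by linarith, h4, h7⟩⟩
    · rintro ⟨⟨h1, h2, h5⟩, hs, ⟨h3, h4, h7⟩⟩
      exact ⟨⟨h1, by linarith, by linarith, h4, h5, by rw [hs]; exact hs0, h7⟩, hs⟩
  have hprod : {p ∈ S | p.2.1 = sstar} = P₁ ×ˢ (({sstar} : Set ℝ) ×ˢ P₂) := by
    rw [heq]; ext p
    simp only [Set.mem_setOf_eq, Set.mem_prod, Set.mem_singleton_iff]
  -- vertices in the factors
  have hSF : IsExtreme ℝ S (P₁ ×ˢ (({sstar} : Set ℝ) ×ˢ P₂)) := hprod ▸ hface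
  have hvF₁ : (x₁, sstar, y₁) ∈ Set.extremePoints ℝ (P₁ ×ˢ (({sstar} : Set ℝ) ×ˢ P₂)) := by
    rw [← hprod]
    exact inter_extremePoints_subset_extremePoints_of_subset hface.1 ⟨⟨hv₁.1, rfl⟩, hv₁⟩
  have hvF₂ : (x₂, sstar, y₂) ∈ Set.extremePoints ℝ (P₁ ×ˢ (({sstar} : Set ℝ) ×ˢ P₂)) := by
    rw [← hprod]
    exact inter_extremePoints_subset_extremePoints_of_subset hface.1 ⟨⟨hv₂.1, rfl⟩, hv₂⟩
  simp only [extremePoints_prod, extremePoints_singleton, Set.mem_prod,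
    Set.mem_singleton_iff] at hvF₁ hvF₂
  obtain ⟨hx₁v, -, hy₁v⟩ := hvF₁
  obtain ⟨hx₂v, -, hy₂v⟩ := hvF₂
  have hsv : sstar ∈ Set.extremePoints ℝ ({sstar} : Set ℝ) := by
    rw [extremePoints_singleton]; exact rfl
  -- adjacency transfer
  have hAdjX : ∀ u v : Fin nA → ℝ, Adj P₁ u v →
      Adj S (u, sstar, y₁) (v, sstar, y₁) := fun u v h =>
    myAdj_of_face hSF (myAdj_prod_left h (by
      rw [extremePoints_prod, extremePoints_singleton]; exact ⟨rfl, hy₁v⟩))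
  have hAdjY : ∀ u v : Fin nB → ℝ, Adj P₂ u v →
      Adj S (x₂, sstar, u) (x₂, sstar, v) := fun u v h =>
    myAdj_of_face hSF (myAdj_prod_right (myAdj_prod_right h hsv) hx₂v)
  refine ⟨hface, heq, ?_⟩
  -- Part 3: the walk
  obtain ⟨N₁, hN₁, f, hf0, hfN, hadjf⟩ := hd₁ x₁ x₂ hx₁v hx₂v
  obtain ⟨N₂, hN₂, g, hg0, hgN, hadjg⟩ := hd₂ y₁ y₂ hy₁v hy₂v
  refine ⟨N₁ + N₂, add_le_add hN₁ hN₂,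
    fun i => if i ≤ N₁ then (f i, sstar, y₁) else (x₂, sstar, g (i - N₁)), ?_, ?_, ?_⟩
  · simp [hf0]
  · by_cases h : N₂ = 0
    · subst h
      have hy : y₁ = y₂ := by rw [← hg0]; exact hgN
      simp [hfN, hy]
    · have hn : ¬ (N₁ + N₂ ≤ N₁) := by omega
      simp [if_neg hn, hgN, h]
  · intro i hi
    by_cases h1 : i + 1 ≤ N₁
    · have h0 : i ≤ N₁ := by omega
      simp only [if_pos h0, if_pos h1]
      exact hAdjX _ _ (hadjf i (by omega))
    · have hiN : N₁ ≤ i := by omega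
      have hkey : (if i ≤ N₁ then (f i, sstar, y₁) else (x₂, sstar, g (i - N₁)))
          = (x₂, sstar, g (i - N₁)) := by
        by_cases h2 : i ≤ N₁
        · have hie : i = N₁ := le_antisymm h2 hiN
          subst hie
          simp [hfN, hg0]
        · simp [h2]
      simp only [hkey, if_neg (show ¬ i + 1 ≤ N₁ from h1)]
      have hstep : i + 1 - N₁ = (i - N₁) + 1 := by omega
      rw [hstep]
      exact hAdjY _ _ (hadjg (i - N₁) (by omega))
end
end
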